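/- arXiv:1702.05836 — 7 statements merged into one kernel-verified Lean document; each statement's English description precedes it below -/
import Mathlib

section
/- Let λ be an integer with λ ≥ 2 and let ν₁, ν₂, ν₃ ∈ ℂ satisfy λ ≠ ν₁ − ν₃ + 1, λ ≠ ν₂ − ν₃ + 1 and λ = ν₁ − ν₂ + 1. Then a function c : ℤ → ℂ is a solution of the system S(λ,ν) if and only if c(q) = 0 for every integer q with q ≠ λ and q ≠ −λ. In particular, the solution space of S(λ,ν) is two-dimensional, spanned by the indicator functions of {λ} and of {−λ}. -/
/-- A function `c : ℤ → ℂ` is a solution of the system `S(λ,ν)`: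
it vanishes for `|q| > λ`, and satisfies the two families of equations (E1) and (E2). -/
def IsSolS (lam : ℤ) (ν₁ ν₂ ν₃ : ℂ) (c : ℤ → ℂ) : Prop :=
  (∀ q : ℤ, lam < |q| → c q = 0) ∧
  (∀ q : ℤ, -lam + 2 ≤ q → q ≤ lam - 1 →
    ((lam : ℂ) - (q : ℂ) + 2) * ((lam : ℂ) - (q : ℂ) + 1) * (ν₁ - ν₂ + (q : ℂ) - 1) * c (q - 2)
      - ((lam : ℂ) + (q : ℂ)) * ((lam : ℂ) + (q : ℂ) - 1) *
          (ν₁ + ν₂ - 2 * ν₃ - 2 * (lam : ℂ) + (q : ℂ) + 1) * c q = 0) ∧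
  (∀ q : ℤ, -lam + 1 ≤ q → q ≤ lam - 2 →
    ((lam : ℂ) - (q : ℂ)) * ((lam : ℂ) - (q : ℂ) - 1) *
        (ν₁ + ν₂ - 2 * ν₃ - 2 * (lam : ℂ) - (q : ℂ) + 1) * c q
      - ((lam : ℂ) + (q : ℂ) + 2) * ((lam : ℂ) + (q : ℂ) + 1) * (ν₁ - ν₂ - (q : ℂ) - 1) *
          c (q + 2) = 0)

/-- The indicator function (in `ℤ → ℂ`) of the singleton `{a}`. -/
def indicatorFn (a : ℤ) : ℤ → ℂ := fun q => if q = a then 1 else 0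

private lemma castNeZero {n : ℤ} (h : n ≠ 0) : (n : ℂ) ≠ 0 := Int.cast_ne_zero.mpr h

/-- The main characterization (the iff part of the theorem). -/
lemma isSolS_iff_aux
    (lam : ℤ) (hlam : 2 ≤ lam) (ν₁ ν₂ ν₃ : ℂ)
    (h13 : (lam : ℂ) ≠ ν₁ - ν₃ + 1) (h23 : (lam : ℂ) ≠ ν₂ - ν₃ + 1)
    (h12 : (lam : ℂ) = ν₁ - ν₂ + 1) (c : ℤ → ℂ) :
    IsSolS lam ν₁ ν₂ ν₃ c ↔ ∀ q : ℤ, q ≠ lam → q ≠ -lam → c q = 0 := by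
  have hν : ν₁ = ν₂ + (lam : ℂ) - 1 := by linear_combination -h12
  have hx0 : ν₂ - ν₃ ≠ 0 := by
    intro h; exact h13 (by rw [hν]; linear_combination -h)
  have hx2 : ν₂ - ν₃ - (lam : ℂ) + 1 ≠ 0 := by
    intro h; exact h23 (by linear_combination -h)
  constructor
  · rintro ⟨hvan, hE1, hE2⟩ q hqp hqm
    -- the two-equation determinant step
    have step : ∀ r : ℤ, -lam + 1 ≤ r → r ≤ lam - 3 → c r = 0 ∧ c (r + 2) = 0 := by
      intro r hr1 hr2
      have heq1 := hE1 (r + 2) (by omega) (by omega)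
      have heq2 := hE2 r (by omega) (by omega)
      rw [hν] at heq1 heq2
      push_cast at heq1 heq2
      rw [show r + 2 - 2 = r from by ring] at heq1
      have n1 : ((lam : ℂ) - r) ≠ 0 := by
        have := castNeZero (n := lam - r) (by omega); push_cast at this; exact this
      have n2 : ((lam : ℂ) - r - 1) ≠ 0 := by
        have := castNeZero (n := lam - r - 1) (by omega); push_cast at this; exact this
      have n3 : ((lam : ℂ) + r + 2) ≠ 0 := by
        have := castNeZero (n := lam + r + 2) (by omega); push_cast at this; exact this
      have n4 : ((lam : ℂ) + r + 1) ≠ 0 := by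
        have := castNeZero (n := lam + r + 1) (by omega); push_cast at this; exact this
      have hN : (((lam : ℂ) - r) * ((lam : ℂ) - r - 1) * ((lam : ℂ) + r + 2) *
          ((lam : ℂ) + r + 1) * (4 * (ν₂ - ν₃) * ((ν₂ - ν₃) - lam + 1))) ≠ 0 := by
        apply mul_ne_zero; apply mul_ne_zero; apply mul_ne_zero; apply mul_ne_zero
        · exact n1
        · exact n2
        · exact n3
        · exact n4
        · exact mul_ne_zero (mul_ne_zero (by norm_num) hx0) hx2
      constructor
      · have k1 : (((lam : ℂ) - r) * ((lam : ℂ) - r - 1) * ((lam : ℂ) + r + 2) *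
            ((lam : ℂ) + r + 1) * (4 * (ν₂ - ν₃) * ((ν₂ - ν₃) - lam + 1))) * c r = 0 := by
          linear_combination
            (((lam : ℂ) + r + 2) * ((lam : ℂ) + r + 1) * (2 * (ν₂ - ν₃) - lam + r + 2)) * heq2
            - (((lam : ℂ) + r + 2) * ((lam : ℂ) + r + 1) * ((lam : ℂ) - r - 2)) * heq1
        exact (mul_eq_zero.mp k1).resolve_left hN
      · have k2 : (((lam : ℂ) - r) * ((lam : ℂ) - r - 1) * ((lam : ℂ) + r + 2) *
            ((lam : ℂ) + r + 1) * (4 * (ν₂ - ν₃) * ((ν₂ - ν₃) - lam + 1))) * c (r + 2) = 0 := by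
          linear_combination
            (((lam : ℂ) - r) * ((lam : ℂ) - r - 1) * ((lam : ℂ) + r)) * heq2
            - (((lam : ℂ) - r) * ((lam : ℂ) - r - 1) * (2 * (ν₂ - ν₃) - lam - r)) * heq1
        exact (mul_eq_zero.mp k2).resolve_left hN
    rcases lt_or_ge lam |q| with habs | habs
    · exact hvan q habs
    · have hb := abs_le.mp habs
      by_cases hc1 : q ≤ lam - 3
      · exact (step q (by omega) hc1).1
      · by_cases hc2 : q = lam - 1
        · have h := (step (lam - 3) (by omega) (by omega)).2
          rw [show lam - 3 + 2 = lam - 1 from by ring] at h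
          rwa [hc2]
        · have hc3 : q = lam - 2 := by omega
          subst hc3
          have heq2 := hE2 (lam - 2) (by omega) (by omega)
          rw [hν] at heq2
          push_cast at heq2
          have k : (4 * ((ν₂ - ν₃) - lam + 1)) * c (lam - 2) = 0 := by
            linear_combination heq2
          rcases mul_eq_zero.mp k with h | h
          · exact absurd h (mul_ne_zero (by norm_num) hx2)
          · exact h
  · rintro hc
    refine ⟨fun q hq => ?_, fun q hq1 hq2 => ?_, fun q hq1 hq2 => ?_⟩
    · rcases lt_abs.mp hq with h' | h' <;> exact hc q (by omega) (by omega)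
    · rw [hc q (by omega) (by omega), mul_zero, sub_zero]
      by_cases hq : q = -lam + 2
      · subst hq
        have hz : ν₁ - ν₂ + ((-lam + 2 : ℤ) : ℂ) - 1 = 0 := by
          push_cast; linear_combination -h12
        rw [hz, mul_zero, zero_mul]
      · rw [hc (q - 2) (by omega) (by omega), mul_zero]
    · rw [hc q (by omega) (by omega), mul_zero, zero_sub, neg_eq_zero]
      by_cases hq : q = lam - 2
      · subst hq
        have hz : ν₁ - ν₂ - ((lam - 2 : ℤ) : ℂ) - 1 = 0 := by
          push_cast; linear_combination -h12
        rw [hz, mul_zero, zero_mul]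
      · rw [hc (q + 2) (by omega) (by omega), mul_zero]

/-- If `λ ≥ 2`, `λ ≠ ν₁ − ν₃ + 1`, `λ ≠ ν₂ − ν₃ + 1` and `λ = ν₁ − ν₂ + 1`, then
`c` is a solution of `S(λ,ν)` iff `c(q) = 0` for every `q ∉ {λ, −λ}`; in particular the
solution space is two-dimensional, spanned by the indicator functions of `{λ}` and `{−λ}`. -/
theorem solutions_of_S_when_lam_eq_nu1_sub_nu2_add_one
    (lam : ℤ) (hlam : 2 ≤ lam) (ν₁ ν₂ ν₃ : ℂ)
    (h13 : (lam : ℂ) ≠ ν₁ - ν₃ + 1) (h23 : (lam : ℂ) ≠ ν₂ - ν₃ + 1)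
    (h12 : (lam : ℂ) = ν₁ - ν₂ + 1) :
    (∀ c : ℤ → ℂ, IsSolS lam ν₁ ν₂ ν₃ c ↔ ∀ q : ℤ, q ≠ lam → q ≠ -lam → c q = 0) ∧
    {c : ℤ → ℂ | IsSolS lam ν₁ ν₂ ν₃ c}
      = (Submodule.span ℂ {indicatorFn lam, indicatorFn (-lam)} : Set (ℤ → ℂ)) ∧
    LinearIndependent ℂ ![indicatorFn lam, indicatorFn (-lam)] := by
  have key := isSolS_iff_aux lam hlam ν₁ ν₂ ν₃ h13 h23 h12
  have hne : lam ≠ -lam := by omega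
  have hne' : -lam ≠ lam := by omega
  refine ⟨key, ?_, ?_⟩
  · ext c
    simp only [Set.mem_setOf_eq, SetLike.mem_coe, Submodule.mem_span_pair, key]
    constructor
    · intro hc
      refine ⟨c lam, c (-lam), funext fun q => ?_⟩
      simp only [Pi.add_apply, Pi.smul_apply, smul_eq_mul, indicatorFn]
      by_cases h1 : q = lam
      · subst h1; simp [hne, hne']
      · by_cases h2 : q = -lam
        · subst h2; simp [hne, hne']
        · simp [h1, h2, hc q h1 h2]
    · rintro ⟨a, b, rfl⟩ q h1 h2
      simp [indicatorFn, h1, h2]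
  · rw [LinearIndependent.pair_iff]
    intro s t h
    constructor
    · have := congrFun h lam
      simpa [indicatorFn, hne, hne'] using this
    · have := congrFun h (-lam)
      simpa [indicatorFn, hne, hne'] using this
end

section
/- Let λ be an integer with λ ≥ 3 and let ν₁, ν₂, ν₃ ∈ ℂ satisfy λ ≠ ν₁ − ν₂ + 1, λ ≠ ν₁ − ν₃ + 1 and λ ≠ ν₂ − ν₃ + 1. Then the only solution of the system S(λ,ν) is the zero function; i.e., if c : ℤ → ℂ is a solution of S(λ,ν) then c(q) = 0 for all q ∈ ℤ. -/
/-- If `λ ≥ 3` and `λ ≠ ν₁ − ν₂ + 1`, `λ ≠ ν₁ − ν₃ + 1`, `λ ≠ ν₂ − ν₃ + 1`,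
then the only solution of `S(λ,ν)` is the zero function. -/
theorem solutions_of_S_trivial
    (lam : ℤ) (hlam : 3 ≤ lam) (ν₁ ν₂ ν₃ : ℂ)
    (h12 : (lam : ℂ) ≠ ν₁ - ν₂ + 1) (h13 : (lam : ℂ) ≠ ν₁ - ν₃ + 1)
    (h23 : (lam : ℂ) ≠ ν₂ - ν₃ + 1)
    (c : ℤ → ℂ) (hc : IsSolS lam ν₁ ν₂ ν₃ c) :
    ∀ q : ℤ, c q = 0 := by
  obtain ⟨h0, hE1, hE2⟩ := hc
  have hd : ((lam : ℂ) - (ν₂ - ν₃ + 1)) * ((lam : ℂ) - (ν₁ - ν₃ + 1)) ≠ 0 :=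
    mul_ne_zero (sub_ne_zero.mpr h23) (sub_ne_zero.mpr h13)
  have castne : ∀ n : ℤ, n ≠ 0 → (n : ℂ) ≠ 0 := fun n hn => Int.cast_ne_zero.mpr hn
  -- key: interior vanishing
  have key : ∀ q : ℤ, -lam + 3 ≤ q → q ≤ lam - 1 → c (q - 2) = 0 ∧ c q = 0 := by
    intro q h1 h2
    have e1 := hE1 q (by omega) (by omega)
    have e2 := hE2 (q - 2) (by omega) (by omega)
    rw [show q - 2 + 2 = q from by ring] at e2
    push_cast at e1 e2
    have hK1 : ((lam : ℂ) - q + 2) ≠ 0 := by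
      have h' : ((lam : ℂ) - q + 2) = ((lam - q + 2 : ℤ) : ℂ) := by push_cast; ring
      rw [h']; exact castne _ (by omega)
    have hK2 : ((lam : ℂ) - q + 1) ≠ 0 := by
      have h' : ((lam : ℂ) - q + 1) = ((lam - q + 1 : ℤ) : ℂ) := by push_cast; ring
      rw [h']; exact castne _ (by omega)
    have hL1 : ((lam : ℂ) + q) ≠ 0 := by
      have h' : ((lam : ℂ) + q) = ((lam + q : ℤ) : ℂ) := by push_cast; ring
      rw [h']; exact castne _ (by omega)
    have hL2 : ((lam : ℂ) + q - 1) ≠ 0 := by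
      have h' : ((lam : ℂ) + q - 1) = ((lam + q - 1 : ℤ) : ℂ) := by push_cast; ring
      rw [h']; exact castne _ (by omega)
    constructor
    · have h : (((lam : ℂ) - q + 2) * ((lam : ℂ) - q + 1) *
          (-4 * (((lam : ℂ) - (ν₂ - ν₃ + 1)) * ((lam : ℂ) - (ν₁ - ν₃ + 1))))) * c (q - 2) = 0 := by
        linear_combination (ν₁ - ν₂ - q + 1) * e1 - (ν₁ + ν₂ - 2 * ν₃ - 2 * lam + q + 1) * e2
      have hP : (((lam : ℂ) - q + 2) * ((lam : ℂ) - q + 1) *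
          (-4 * (((lam : ℂ) - (ν₂ - ν₃ + 1)) * ((lam : ℂ) - (ν₁ - ν₃ + 1))))) ≠ 0 :=
        mul_ne_zero (mul_ne_zero hK1 hK2) (mul_ne_zero (by norm_num) hd)
      exact (mul_eq_zero.mp h).resolve_left hP
    · have h : (((lam : ℂ) + q) * ((lam : ℂ) + q - 1) *
          (-4 * (((lam : ℂ) - (ν₂ - ν₃ + 1)) * ((lam : ℂ) - (ν₁ - ν₃ + 1))))) * c q = 0 := by
        linear_combination (ν₁ + ν₂ - 2 * ν₃ - 2 * lam - q + 3) * e1 - (ν₁ - ν₂ + q - 1) * e2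
      have hP : (((lam : ℂ) + q) * ((lam : ℂ) + q - 1) *
          (-4 * (((lam : ℂ) - (ν₂ - ν₃ + 1)) * ((lam : ℂ) - (ν₁ - ν₃ + 1))))) ≠ 0 :=
        mul_ne_zero (mul_ne_zero hL1 hL2) (mul_ne_zero (by norm_num) hd)
      exact (mul_eq_zero.mp h).resolve_left hP
  have hmid : ∀ q : ℤ, -lam + 1 ≤ q → q ≤ lam - 1 → c q = 0 := by
    intro q hq1 hq2
    rcases le_or_gt q (lam - 3) with h | h
    · have := (key (q + 2) (by omega) (by omega)).1
      rwa [show q + 2 - 2 = q from by ring] at this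
    · exact (key q (by omega) (by omega)).2
  have h12' : (ν₁ - ν₂ + 1 - (lam : ℂ)) ≠ 0 := by
    intro h; apply h12; linear_combination -h
  -- c lam = 0
  have htop : c lam = 0 := by
    have e := hE2 (lam - 2) (by omega) (by omega)
    rw [show lam - 2 + 2 = lam from by ring] at e
    push_cast at e
    have hprev : c (lam - 2) = 0 := hmid _ (by omega) (by omega)
    rw [hprev] at e
    have h : ((2 * (lam : ℂ)) * (2 * (lam : ℂ) - 1) * (ν₁ - ν₂ + 1 - (lam : ℂ))) * c lam = 0 := by
      linear_combination -e
    have hP : ((2 * (lam : ℂ)) * (2 * (lam : ℂ) - 1) * (ν₁ - ν₂ + 1 - (lam : ℂ))) ≠ 0 := by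
      refine mul_ne_zero (mul_ne_zero ?_ ?_) h12'
      · have h' : (2 * (lam : ℂ)) = ((2 * lam : ℤ) : ℂ) := by push_cast; ring
        rw [h']; exact castne _ (by omega)
      · have h' : (2 * (lam : ℂ) - 1) = ((2 * lam - 1 : ℤ) : ℂ) := by push_cast; ring
        rw [h']; exact castne _ (by omega)
    exact (mul_eq_zero.mp h).resolve_left hP
  -- c (-lam) = 0
  have hbot : c (-lam) = 0 := by
    have e := hE1 (-lam + 2) (by omega) (by omega)
    rw [show -lam + 2 - 2 = -lam from by ring] at e
    push_cast at e
    have hnext : c (-lam + 2) = 0 := hmid _ (by omega) (by omega)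
    rw [hnext] at e
    have h : ((2 * (lam : ℂ)) * (2 * (lam : ℂ) - 1) * (ν₁ - ν₂ + 1 - (lam : ℂ))) * c (-lam) = 0 := by
      linear_combination e
    have hP : ((2 * (lam : ℂ)) * (2 * (lam : ℂ) - 1) * (ν₁ - ν₂ + 1 - (lam : ℂ))) ≠ 0 := by
      refine mul_ne_zero (mul_ne_zero ?_ ?_) h12'
      · have h' : (2 * (lam : ℂ)) = ((2 * lam : ℤ) : ℂ) := by push_cast; ring
        rw [h']; exact castne _ (by omega)
      · have h' : (2 * (lam : ℂ) - 1) = ((2 * lam - 1 : ℤ) : ℂ) := by push_cast; ring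
        rw [h']; exact castne _ (by omega)
    exact (mul_eq_zero.mp h).resolve_left hP
  intro q
  rcases lt_or_ge lam |q| with h | h
  · exact h0 q h
  · have habs := abs_le.mp h
    rcases eq_or_lt_of_le habs.2 with h' | h'
    · rw [h']; exact htop
    · rcases eq_or_lt_of_le habs.1 with h'' | h''
      · rw [← h'']; exact hbot
      · exact hmid q (by omega) (by omega)
end

section
/- Let ν₁, ν₂, ν₃ ∈ ℂ satisfy ν₁ − ν₂ ≠ 1, ν₁ − ν₃ ≠ 1 and ν₂ − ν₃ ≠ 1 (i.e., 2 ≠ ν₁−ν₂+1, 2 ≠ ν₁−ν₃+1, 2 ≠ ν₂−ν₃+1). Then the solution space of the system S(2,ν) is one-dimensional, spanned by the function c* : ℤ → ℂ with c*(2) = c*(−2) = (ν₁+ν₂−2ν₃−3)/(6(ν₁−ν₂−1)), c*(0) = 1, and c*(q) = 0 for all other integers q. -/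
/-- The distinguished solution `c*` for `λ = 2`. -/
noncomputable def cStar (ν₁ ν₂ ν₃ : ℂ) : ℤ → ℂ := fun q =>
  if q = 0 then 1
  else if q = 2 ∨ q = -2 then (ν₁ + ν₂ - 2 * ν₃ - 3) / (6 * (ν₁ - ν₂ - 1))
  else 0

/-- If `ν₁ − ν₂ ≠ 1`, `ν₁ − ν₃ ≠ 1` and `ν₂ − ν₃ ≠ 1`, then the solution space of
`S(2,ν)` is one-dimensional, spanned by the (nonzero) function `c*`. -/
theorem solutions_of_S_lam_two
    (ν₁ ν₂ ν₃ : ℂ)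
    (h12 : ν₁ - ν₂ ≠ 1) (h13 : ν₁ - ν₃ ≠ 1) (h23 : ν₂ - ν₃ ≠ 1) :
    {c : ℤ → ℂ | IsSolS 2 ν₁ ν₂ ν₃ c}
      = (Submodule.span ℂ {cStar ν₁ ν₂ ν₃} : Set (ℤ → ℂ)) ∧
    cStar ν₁ ν₂ ν₃ ≠ 0 := by
  have hB1 : ν₁ - ν₂ - 1 ≠ 0 := by intro h; exact h12 (by linear_combination h)
  have hP : ν₁ - ν₃ - 1 ≠ 0 := by intro h; exact h13 (by linear_combination h)
  have hM : ν₂ - ν₃ - 1 ≠ 0 := by intro h; exact h23 (by linear_combination h)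
  constructor
  · ext c
    simp only [Set.mem_setOf_eq, SetLike.mem_coe, Submodule.mem_span_singleton]
    constructor
    · rintro ⟨hv, hE1, hE2⟩
      have e0 := hE1 0 (by norm_num) (by norm_num)
      have e1 := hE1 1 (by norm_num) (by norm_num)
      have e2 := hE2 (-1) (by norm_num) (by norm_num)
      have e3 := hE2 0 (by norm_num) (by norm_num)
      norm_num at e0 e1 e2 e3
      -- e0: relates c (-2), c 0 ; e3: c 0, c 2 ; e1,e2: c (-1), c 1
      have ha : c (-1) = 0 := by
        have key : (ν₁ - ν₃ - 1) * ((ν₂ - ν₃ - 1) * c (-1)) = 0 := by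
          linear_combination (-(1:ℂ)/24) * ((ν₁-ν₂) * e1) + ((1:ℂ)/24) * ((ν₁+ν₂-2*ν₃-2) * e2)
        rcases mul_eq_zero.mp key with h | h
        · exact absurd h hP
        · rcases mul_eq_zero.mp h with h | h
          · exact absurd h hM
          · exact h
      have hb : c 1 = 0 := by
        have key : (ν₁ - ν₃ - 1) * ((ν₂ - ν₃ - 1) * c 1) = 0 := by
          linear_combination ((1:ℂ)/24) * ((ν₁-ν₂) * e2) + (-(1:ℂ)/24) * ((ν₁+ν₂-2*ν₃-2) * e1)
        rcases mul_eq_zero.mp key with h | h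
        · exact absurd h hP
        · rcases mul_eq_zero.mp h with h | h
          · exact absurd h hM
          · exact h
      have hcm2 : c (-2) = c 0 * ((ν₁ + ν₂ - 2 * ν₃ - 3) / (6 * (ν₁ - ν₂ - 1))) := by
        field_simp
        linear_combination ((1:ℂ)/2) * e0
      have hc2 : c 2 = c 0 * ((ν₁ + ν₂ - 2 * ν₃ - 3) / (6 * (ν₁ - ν₂ - 1))) := by
        field_simp
        linear_combination (-(1:ℂ)/2) * e3
      refine ⟨c 0, funext fun q => ?_⟩
      show c 0 * cStar ν₁ ν₂ ν₃ q = c q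
      by_cases h0 : q = 0
      · subst h0; simp [cStar]
      · by_cases h2 : q = 2 ∨ q = -2
        · rcases h2 with rfl | rfl
          · simp [cStar, hc2]
          · simp [cStar, hcm2]
        · by_cases h1 : q = 1 ∨ q = -1
          · rcases h1 with rfl | rfl
            · simp [cStar, hb]
            · simp [cStar, ha]
          · have hq : (2:ℤ) < |q| := by
              rcases le_or_gt q 0 with h | h
              · rw [abs_of_nonpos h]; omega
              · rw [abs_of_pos h]; omega
            rw [hv q hq]
            simp [cStar, h0, h2]
    · rintro ⟨k, rfl⟩
      refine ⟨fun q hq => ?_, fun q hq1 hq2 => ?_, fun q hq1 hq2 => ?_⟩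
      · have h0 : q ≠ 0 := by intro h; subst h; simp at hq
        have h2 : ¬(q = 2 ∨ q = -2) := by
          rintro (rfl | rfl) <;> simp at hq
        simp [cStar, h0, h2]
      · have hq1' : (0:ℤ) ≤ q := by omega
        have hq2' : q ≤ 1 := by omega
        interval_cases q
        · norm_num [cStar]
          field_simp
          ring
        · norm_num [cStar]
      · have hq1' : (-1:ℤ) ≤ q := by omega
        have hq2' : q ≤ 0 := by omega
        interval_cases q
        · norm_num [cStar]
        · norm_num [cStar]
          field_simp
          ring
  · intro h
    have := congrFun h 0
    simp [cStar] at this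
end

section
/- Let λ be an integer with λ ≥ 2 and let ν₁, ν₂, ν₃ ∈ ℂ satisfy λ = ν₂ − ν₃ + 1, λ ≠ ν₁ − ν₂ + 1 and ν₁ ≠ ν₂. Then the solution space of the system S(λ,ν) is two-dimensional, spanned by the functions c₀ and c₁ defined by: c₀(λ−2k) = (∏_{a=0}^{2k−1}(2λ−a)) / (2k)! for every integer k with 0 ≤ k ≤ λ, and c₀(q) = 0 for all other integers q; c₁(λ−1−2k) = (∏_{a=0}^{2k−1}(2λ−1−a)) / (2k+1)! for every integer k with 0 ≤ k ≤ λ−1, and c₁(q) = 0 for all other integers q (empty products equal 1). -/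
/-- The solution `c₀`: `c₀(λ−2k) = (∏_{a=0}^{2k−1}(2λ−a))/(2k)!` for `0 ≤ k ≤ λ`,
and `c₀ = 0` elsewhere. -/
noncomputable def solC0 (lam : ℤ) : ℤ → ℂ := fun q =>
  if (lam - q) % 2 = 0 ∧ -lam ≤ q ∧ q ≤ lam then
    (∏ a ∈ Finset.range (lam - q).toNat, (2 * (lam : ℂ) - (a : ℂ)))
      / (Nat.factorial (lam - q).toNat : ℂ)
  else 0

/-- The solution `c₁`: `c₁(λ−1−2k) = (∏_{a=0}^{2k−1}(2λ−1−a))/(2k+1)!` for `0 ≤ k ≤ λ−1`,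
and `c₁ = 0` elsewhere. -/
noncomputable def solC1 (lam : ℤ) : ℤ → ℂ := fun q =>
  if (lam - 1 - q) % 2 = 0 ∧ -lam + 1 ≤ q ∧ q ≤ lam - 1 then
    (∏ a ∈ Finset.range (lam - 1 - q).toNat, (2 * (lam : ℂ) - 1 - (a : ℂ)))
      / (Nat.factorial ((lam - 1 - q).toNat + 1) : ℂ)
  else 0

lemma solC0_supp (lam q : ℤ) (h : lam < |q|) : solC0 lam q = 0 := by
  simp only [solC0]; rw [if_neg]; rintro ⟨-, h1, h2⟩; rw [lt_abs] at h; omega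

lemma solC1_supp (lam q : ℤ) (h : lam < |q|) : solC1 lam q = 0 := by
  simp only [solC1]; rw [if_neg]; rintro ⟨-, h1, h2⟩; rw [lt_abs] at h; omega

lemma solC0_self (lam : ℤ) (h : 0 ≤ lam) : solC0 lam lam = 1 := by
  simp only [solC0]
  rw [if_pos ⟨by omega, by omega, le_refl _⟩, show (lam - lam).toNat = 0 by omega]
  simp

lemma solC0_pred (lam : ℤ) : solC0 lam (lam - 1) = 0 := by
  simp only [solC0]; rw [if_neg]; rintro ⟨h, -, -⟩; omega

lemma solC1_self (lam : ℤ) : solC1 lam lam = 0 := by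
  simp only [solC1]; rw [if_neg]; rintro ⟨-, -, h⟩; omega

lemma solC1_pred (lam : ℤ) (h : 1 ≤ lam) : solC1 lam (lam - 1) = 1 := by
  simp only [solC1]
  rw [if_pos ⟨by omega, by omega, le_refl _⟩, show (lam - 1 - (lam - 1)).toNat = 0 by omega]
  simp [Nat.factorial]

lemma rel0 (lam : ℤ) (hlam : 2 ≤ lam) (q : ℤ) (h1 : -lam ≤ q) (h2 : q ≤ lam - 2) :
    ((lam : ℂ) - q) * ((lam : ℂ) - q - 1) * solC0 lam q
      = ((lam : ℂ) + q + 2) * ((lam : ℂ) + q + 1) * solC0 lam (q + 2) := by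
  by_cases hp : (lam - q) % 2 = 0
  · set m := (lam - q - 2).toNat with hm
    have hm2 : lam - q = (m : ℤ) + 2 := by omega
    have c1 : solC0 lam q
        = (∏ a ∈ Finset.range (m + 2), (2 * (lam : ℂ) - (a : ℂ)))
          / (Nat.factorial (m + 2) : ℂ) := by
      simp only [solC0]
      rw [if_pos ⟨hp, h1, by omega⟩, show (lam - q).toNat = m + 2 by omega]
    have c2 : solC0 lam (q + 2)
        = (∏ a ∈ Finset.range m, (2 * (lam : ℂ) - (a : ℂ))) / (Nat.factorial m : ℂ) := by
      simp only [solC0]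
      rw [if_pos ⟨by omega, by omega, by omega⟩, show (lam - (q + 2)).toNat = m by omega]
    have hq : (q : ℂ) = (lam : ℂ) - (m : ℂ) - 2 := by
      have : q = lam - (m : ℤ) - 2 := by omega
      rw [this]; push_cast; ring
    rw [c1, c2, hq, Finset.prod_range_succ, Finset.prod_range_succ]
    have hfac : (Nat.factorial (m + 2) : ℂ)
        = ((m : ℂ) + 2) * ((m : ℂ) + 1) * (Nat.factorial m : ℂ) := by
      rw [Nat.factorial_succ, Nat.factorial_succ]; push_cast; ring
    rw [hfac]
    have hn1 : ((m : ℂ) + 2) ≠ 0 := by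
      have := Nat.cast_ne_zero (R := ℂ).mpr (show m + 2 ≠ 0 by omega)
      push_cast at this; exact this
    have hn2 : ((m : ℂ) + 1) ≠ 0 := by
      have := Nat.cast_ne_zero (R := ℂ).mpr (show m + 1 ≠ 0 by omega)
      push_cast at this; exact this
    have hn3 : (Nat.factorial m : ℂ) ≠ 0 := Nat.cast_ne_zero.mpr m.factorial_ne_zero
    push_cast
    field_simp
    ring
  · have e1 : solC0 lam q = 0 := by
      simp only [solC0]; rw [if_neg]; rintro ⟨h, -, -⟩; exact hp h
    have e2 : solC0 lam (q + 2) = 0 := by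
      simp only [solC0]; rw [if_neg]; rintro ⟨h, -, -⟩; omega
    rw [e1, e2]; ring

lemma rel1 (lam : ℤ) (hlam : 2 ≤ lam) (q : ℤ) (h1 : -lam ≤ q) (h2 : q ≤ lam - 2) :
    ((lam : ℂ) - q) * ((lam : ℂ) - q - 1) * solC1 lam q
      = ((lam : ℂ) + q + 2) * ((lam : ℂ) + q + 1) * solC1 lam (q + 2) := by
  by_cases hp : (lam - 1 - q) % 2 = 0
  · -- parity forces -lam+1 ≤ q ≤ lam-3
    set m := (lam - 3 - q).toNat with hm
    have hm2 : lam - 1 - q = (m : ℤ) + 2 := by omega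
    have c1 : solC1 lam q
        = (∏ a ∈ Finset.range (m + 2), (2 * (lam : ℂ) - 1 - (a : ℂ)))
          / (Nat.factorial (m + 3) : ℂ) := by
      simp only [solC1]
      rw [if_pos ⟨hp, by omega, by omega⟩, show (lam - 1 - q).toNat = m + 2 by omega]
    have c2 : solC1 lam (q + 2)
        = (∏ a ∈ Finset.range m, (2 * (lam : ℂ) - 1 - (a : ℂ)))
          / (Nat.factorial (m + 1) : ℂ) := by
      simp only [solC1]
      rw [if_pos ⟨by omega, by omega, by omega⟩, show (lam - 1 - (q + 2)).toNat = m by omega]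
    have hq : (q : ℂ) = (lam : ℂ) - (m : ℂ) - 3 := by
      have : q = lam - (m : ℤ) - 3 := by omega
      rw [this]; push_cast; ring
    rw [c1, c2, hq, Finset.prod_range_succ, Finset.prod_range_succ]
    have hfac : (Nat.factorial (m + 3) : ℂ)
        = ((m : ℂ) + 3) * ((m : ℂ) + 2) * (Nat.factorial (m + 1) : ℂ) := by
      rw [show m + 3 = (m + 2) + 1 by omega, Nat.factorial_succ, Nat.factorial_succ]
      push_cast; ring
    rw [hfac]
    have hn1 : ((m : ℂ) + 3) ≠ 0 := by
      have := Nat.cast_ne_zero (R := ℂ).mpr (show m + 3 ≠ 0 by omega)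
      push_cast at this; exact this
    have hn2 : ((m : ℂ) + 2) ≠ 0 := by
      have := Nat.cast_ne_zero (R := ℂ).mpr (show m + 2 ≠ 0 by omega)
      push_cast at this; exact this
    have hn3 : (Nat.factorial (m + 1) : ℂ) ≠ 0 := Nat.cast_ne_zero.mpr (m + 1).factorial_ne_zero
    push_cast
    field_simp
    ring
  · have e1 : solC1 lam q = 0 := by
      simp only [solC1]; rw [if_neg]; rintro ⟨h, -, -⟩; exact hp h
    have e2 : solC1 lam (q + 2) = 0 := by
      simp only [solC1]; rw [if_neg]; rintro ⟨h, -, -⟩; omega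
    rw [e1, e2]; ring

lemma isSolS_of_rel (lam : ℤ) (hlam : 2 ≤ lam) (ν₁ ν₂ ν₃ : ℂ)
    (h23 : (lam : ℂ) = ν₂ - ν₃ + 1) (c : ℤ → ℂ)
    (hsupp : ∀ q : ℤ, lam < |q| → c q = 0)
    (hrel : ∀ q : ℤ, -lam ≤ q → q ≤ lam - 2 →
      ((lam : ℂ) - q) * ((lam : ℂ) - q - 1) * c q
        = ((lam : ℂ) + q + 2) * ((lam : ℂ) + q + 1) * c (q + 2)) :
    IsSolS lam ν₁ ν₂ ν₃ c := by
  refine ⟨hsupp, ?_, ?_⟩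
  · intro q hq1 hq2
    have h := hrel (q - 2) (by omega) (by omega)
    rw [show q - 2 + 2 = q by ring] at h
    push_cast at h
    linear_combination (ν₁ - ν₂ + (q : ℂ) - 1) * h
      + 2 * (((lam : ℂ) + q) * ((lam : ℂ) + q - 1) * c q) * h23
  · intro q hq1 hq2
    have h := hrel q (by omega) (by omega)
    linear_combination (ν₁ - ν₂ - (q : ℂ) - 1) * h
      - 2 * (((lam : ℂ) - q) * ((lam : ℂ) - q - 1) * c q) * h23

lemma rel_of_isSol (lam : ℤ) (hlam : 2 ≤ lam) (ν₁ ν₂ ν₃ : ℂ)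
    (h23 : (lam : ℂ) = ν₂ - ν₃ + 1) (h12 : (lam : ℂ) ≠ ν₁ - ν₂ + 1) (hne : ν₁ ≠ ν₂)
    (c : ℤ → ℂ) (hc : IsSolS lam ν₁ ν₂ ν₃ c) (q : ℤ) (h1 : -lam ≤ q) (h2 : q ≤ lam - 2) :
    ((lam : ℂ) - q) * ((lam : ℂ) - q - 1) * c q
      = ((lam : ℂ) + q + 2) * ((lam : ℂ) + q + 1) * c (q + 2) := by
  have hB0 : ν₁ - ν₂ ≠ 0 := sub_ne_zero.mpr hne
  by_cases hA : ν₁ - ν₂ + (q : ℂ) + 1 ≠ 0 ∧ q ≤ lam - 3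
  · have h := hc.2.1 (q + 2) (by omega) (by omega)
    rw [show q + 2 - 2 = q by ring] at h
    push_cast at h
    have key : (ν₁ - ν₂ + (q : ℂ) + 1) *
        (((lam : ℂ) - q) * ((lam : ℂ) - q - 1) * c q
          - ((lam : ℂ) + q + 2) * ((lam : ℂ) + q + 1) * c (q + 2)) = 0 := by
      linear_combination h - 2 * (((lam : ℂ) + q + 2) * ((lam : ℂ) + q + 1) * c (q + 2)) * h23
    rcases mul_eq_zero.mp key with h' | h'
    · exact absurd h' hA.1
    · exact sub_eq_zero.mp h'
  · have hB : ν₁ - ν₂ - (q : ℂ) - 1 ≠ 0 ∧ -lam + 1 ≤ q := by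
      rcases not_and_or.mp hA with h | h
      · push_neg at h
        constructor
        · rw [show ν₁ - ν₂ - (q : ℂ) - 1 = 2 * (ν₁ - ν₂) - (ν₁ - ν₂ + (q : ℂ) + 1) by ring,
            h, sub_zero]
          exact mul_ne_zero two_ne_zero hB0
        · by_contra hq
          have hq' : q = -lam := by omega
          apply h12
          rw [hq'] at h; push_cast at h
          linear_combination -h
      · have hq' : q = lam - 2 := by omega
        refine ⟨?_, by omega⟩
        intro h0; apply h12
        rw [hq'] at h0; push_cast at h0
        linear_combination -h0
    have h := hc.2.2 q hB.2 (by omega)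
    have key : (ν₁ - ν₂ - (q : ℂ) - 1) *
        (((lam : ℂ) - q) * ((lam : ℂ) - q - 1) * c q
          - ((lam : ℂ) + q + 2) * ((lam : ℂ) + q + 1) * c (q + 2)) = 0 := by
      linear_combination h + 2 * (((lam : ℂ) - q) * ((lam : ℂ) - q - 1) * c q) * h23
    rcases mul_eq_zero.mp key with h' | h'
    · exact absurd h' hB.1
    · exact sub_eq_zero.mp h'

lemma eq_zero_of_isSol (lam : ℤ) (hlam : 2 ≤ lam) (ν₁ ν₂ ν₃ : ℂ)
    (h23 : (lam : ℂ) = ν₂ - ν₃ + 1) (h12 : (lam : ℂ) ≠ ν₁ - ν₂ + 1) (hne : ν₁ ≠ ν₂)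
    (c : ℤ → ℂ) (hc : IsSolS lam ν₁ ν₂ ν₃ c) (h0 : c lam = 0) (h1 : c (lam - 1) = 0) :
    ∀ q : ℤ, c q = 0 := by
  have key : ∀ n : ℕ, c (lam - n) = 0 := by
    intro n
    induction n using Nat.strong_induction_on with
    | _ n ih =>
      by_cases hn0 : n = 0
      · rw [hn0]; simpa using h0
      by_cases hn1 : n = 1
      · rw [hn1]; simpa using h1
      by_cases hbig : 2 * lam < (n : ℤ)
      · exact hc.1 _ (by rw [lt_abs]; right; omega)
      · have hrel := rel_of_isSol lam hlam ν₁ ν₂ ν₃ h23 h12 hne c hc (lam - n)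
          (by omega) (by omega)
        have hprev : c (lam - n + 2) = 0 := by
          have := ih (n - 2) (by omega)
          rwa [show lam - ((n - 2 : ℕ) : ℤ) = lam - n + 2 by
            rw [Nat.cast_sub (by omega)]; push_cast; ring] at this
        rw [hprev, mul_zero] at hrel
        have hred : ((n : ℂ)) * ((n : ℂ) - 1) * c (lam - n) = 0 := by
          push_cast at hrel ⊢; linear_combination hrel
        have hn2 : ((n : ℂ)) ≠ 0 := Nat.cast_ne_zero.mpr hn0
        have hn3 : ((n : ℂ) - 1) ≠ 0 := by
          have : ((n : ℂ)) ≠ 1 := by exact_mod_cast (show n ≠ 1 from hn1)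
          exact sub_ne_zero.mpr this
        rcases mul_eq_zero.mp hred with h' | h'
        · exact absurd (mul_eq_zero.mp h') (by rintro (h | h) <;> [exact hn2 h; exact hn3 h])
        · exact h'
  intro q
  by_cases h : q ≤ lam
  · have := key (lam - q).toNat
    rwa [show lam - (((lam - q).toNat : ℕ) : ℤ) = q by omega] at this
  · exact hc.1 q (by rw [lt_abs]; left; omega)

lemma isSol_comb (lam : ℤ) (ν₁ ν₂ ν₃ : ℂ) (a b : ℂ) (c d : ℤ → ℂ)
    (hc : IsSolS lam ν₁ ν₂ ν₃ c) (hd : IsSolS lam ν₁ ν₂ ν₃ d) :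
    IsSolS lam ν₁ ν₂ ν₃ (a • c + b • d) := by
  refine ⟨?_, ?_, ?_⟩
  · intro q h
    simp [Pi.add_apply, Pi.smul_apply, hc.1 q h, hd.1 q h]
  · intro q hq1 hq2
    have e1 := hc.2.1 q hq1 hq2
    have e2 := hd.2.1 q hq1 hq2
    simp only [Pi.add_apply, Pi.smul_apply, smul_eq_mul]
    linear_combination a * e1 + b * e2
  · intro q hq1 hq2
    have e1 := hc.2.2 q hq1 hq2
    have e2 := hd.2.2 q hq1 hq2
    simp only [Pi.add_apply, Pi.smul_apply, smul_eq_mul]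
    linear_combination a * e1 + b * e2

lemma isSol_sub_comb (lam : ℤ) (ν₁ ν₂ ν₃ : ℂ) (a b : ℂ) (c d e : ℤ → ℂ)
    (hc : IsSolS lam ν₁ ν₂ ν₃ c) (hd : IsSolS lam ν₁ ν₂ ν₃ d)
    (he : IsSolS lam ν₁ ν₂ ν₃ e) :
    IsSolS lam ν₁ ν₂ ν₃ (fun q => c q - a * d q - b * e q) := by
  refine ⟨?_, ?_, ?_⟩
  · intro q h
    show c q - a * d q - b * e q = 0
    rw [hc.1 q h, hd.1 q h, he.1 q h]; ring
  · intro q hq1 hq2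
    have e1 := hc.2.1 q hq1 hq2
    have e2 := hd.2.1 q hq1 hq2
    have e3 := he.2.1 q hq1 hq2
    simp only []
    linear_combination e1 - a * e2 - b * e3
  · intro q hq1 hq2
    have e1 := hc.2.2 q hq1 hq2
    have e2 := hd.2.2 q hq1 hq2
    have e3 := he.2.2 q hq1 hq2
    simp only []
    linear_combination e1 - a * e2 - b * e3


/-- If `λ ≥ 2`, `λ = ν₂ − ν₃ + 1`, `λ ≠ ν₁ − ν₂ + 1` and `ν₁ ≠ ν₂`, then the solution
space of `S(λ,ν)` is two-dimensional, spanned by the functions `c₀` and `c₁`. -/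
theorem solutions_of_S_when_lam_eq_nu2_sub_nu3_add_one
    (lam : ℤ) (hlam : 2 ≤ lam) (ν₁ ν₂ ν₃ : ℂ)
    (h23 : (lam : ℂ) = ν₂ - ν₃ + 1) (h12 : (lam : ℂ) ≠ ν₁ - ν₂ + 1) (hne : ν₁ ≠ ν₂) :
    {c : ℤ → ℂ | IsSolS lam ν₁ ν₂ ν₃ c}
      = (Submodule.span ℂ {solC0 lam, solC1 lam} : Set (ℤ → ℂ)) ∧
    LinearIndependent ℂ ![solC0 lam, solC1 lam] := by
  have hC0 : IsSolS lam ν₁ ν₂ ν₃ (solC0 lam) :=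
    isSolS_of_rel lam hlam ν₁ ν₂ ν₃ h23 _ (solC0_supp lam) (rel0 lam hlam)
  have hC1 : IsSolS lam ν₁ ν₂ ν₃ (solC1 lam) :=
    isSolS_of_rel lam hlam ν₁ ν₂ ν₃ h23 _ (solC1_supp lam) (rel1 lam hlam)
  constructor
  · ext c
    simp only [Set.mem_setOf_eq, SetLike.mem_coe, Submodule.mem_span_pair]
    constructor
    · intro hc
      refine ⟨c lam, c (lam - 1), ?_⟩
      have hsub : IsSolS lam ν₁ ν₂ ν₃
          (fun q => c q - c lam * solC0 lam q - c (lam - 1) * solC1 lam q) :=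
        isSol_sub_comb lam ν₁ ν₂ ν₃ _ _ c _ _ hc hC0 hC1
      have hz := eq_zero_of_isSol lam hlam ν₁ ν₂ ν₃ h23 h12 hne _ hsub
        (by show c lam - c lam * solC0 lam lam - c (lam - 1) * solC1 lam lam = 0
            rw [solC0_self lam (by omega), solC1_self lam]; ring)
        (by show c (lam - 1) - c lam * solC0 lam (lam - 1)
              - c (lam - 1) * solC1 lam (lam - 1) = 0
            rw [solC0_pred lam, solC1_pred lam (by omega)]; ring)
      funext q
      have := hz q
      simp only [Pi.add_apply, Pi.smul_apply, smul_eq_mul]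
      linear_combination -this
    · rintro ⟨a, b, rfl⟩
      exact isSol_comb lam ν₁ ν₂ ν₃ a b _ _ hC0 hC1
  · rw [linearIndependent_fin2]
    simp only [Matrix.cons_val_one, Matrix.head_cons, Matrix.cons_val_zero]
    constructor
    · intro h
      have := congrFun h (lam - 1)
      rw [solC1_pred lam (by omega)] at this
      simpa using this
    · intro a h
      have := congrFun h lam
      rw [Pi.smul_apply, solC1_self lam, solC0_self lam (by omega)] at this
      simpa using this
end

section
/- Let λ be an integer with λ ≥ 2 and let ν₁, ν₂, ν₃ ∈ ℂ satisfy λ = ν₂ − ν₃ + 1 and λ = ν₁ − ν₂ + 1. Then the solution space of the system S(λ,ν) is four-dimensional, spanned by the indicator function of {λ}, the indicator function of {−λ}, and the two functions c₀ and c₁ defined by: c₀(λ−2k) = (∏_{a=0}^{2k−1}(2λ−a)) / (2k)! for 0 ≤ k ≤ λ, and c₀(q) = 0 at all other integers q; c₁(λ−1−2k) = (∏_{a=0}^{2k−1}(2λ−1−a)) / (2k+1)! for 0 ≤ k ≤ λ−1, and c₁(q) = 0 at all other integers q (empty products equal 1). -/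
/-!
Under `λ = ν₁ - ν₂ + 1 = ν₂ - ν₃ + 1`, equation (E1) at `q` is `(λ + q - 2)` times the two-step
recurrence `(λ - q + 2)(λ - q + 1) c(q - 2) = (λ + q)(λ + q - 1) c(q)`, and (E2) at `q` is
`(λ - q - 2)` times the same recurrence at `q + 2`. Hence a solution is free at `±λ`, while on
`-λ < q < λ` it is determined by `c(λ - 1)` and `c(λ - 2)`, the recurrence running downward in
steps of two. The recurrence is satisfied by `q ↦ C(2λ, λ - q)`, because
`C(n, m + 2)(m + 2)(m + 1) = C(n, m)(n - m)(n - m - 1)`, and `c₀`, `c₁` are this binomial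
coefficient restricted to the two parity classes, `c₁` scaled by `1 / (2λ)`.
-/

theorem Submodule.eq_span_and_linearIndependent_of_dual {K M ι : Type*} [CommRing K]
    [AddCommGroup M] [Module K M] [Fintype ι] [DecidableEq ι] {S : Submodule K M}
    {v : ι → M} (φ : ι → Module.Dual K M) (hv : ∀ i, v i ∈ S)
    (hφv : ∀ i j, φ i (v j) = if i = j then 1 else 0)
    (hφ : ∀ x ∈ S, (∀ i, φ i x = 0) → x = 0) :
    S = Submodule.span K (Set.range v) ∧ LinearIndependent K v := by
  have hcoord : ∀ (g : ι → K) i, φ i (∑ j, g j • v j) = g i := fun g i => by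
    simp [hφv]
  refine ⟨le_antisymm (fun x hx => ?_) (Submodule.span_le.2 (Set.range_subset_iff.2 hv)),
    Fintype.linearIndependent_iff.2 fun g hg i => by simpa [hg] using (hcoord g i).symm⟩
  have hsum : ∑ j, φ j x • v j ∈ S := S.sum_mem fun j _ => S.smul_mem _ (hv j)
  have : x = ∑ j, φ j x • v j :=
    sub_eq_zero.1 (hφ _ (S.sub_mem hx hsum) fun i => by simp only [map_sub, hcoord, sub_self])
  rw [this]
  exact Submodule.sum_mem _ fun j _ => Submodule.smul_mem _ _ (Submodule.subset_span ⟨j, rfl⟩)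

theorem prod_range_cast_sub_eq_descFactorial {R : Type*} [CommRing R] {N k : ℕ} (h : k ≤ N) :
    ∏ a ∈ Finset.range k, ((N : R) - a) = N.descFactorial k := by
  rw [Nat.descFactorial_eq_prod_range, Nat.cast_prod]
  refine Finset.prod_congr rfl fun a ha => ?_
  rw [Nat.cast_sub (by rw [Finset.mem_range] at ha; omega)]

def TwoStepRec (lam : ℤ) (c : ℤ → ℂ) (q : ℤ) : Prop :=
  ((lam : ℂ) - q + 2) * ((lam : ℂ) - q + 1) * c (q - 2) =
    ((lam : ℂ) + q) * ((lam : ℂ) + q - 1) * c q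

def twoStepRecSubmodule (lam : ℤ) : Submodule ℂ (ℤ → ℂ) where
  carrier :=
    {c | (∀ q, lam < |q| → c q = 0) ∧ ∀ q, -lam + 3 ≤ q → q ≤ lam - 1 → TwoStepRec lam c q}
  zero_mem' := ⟨fun _ _ => rfl, fun _ _ _ => by simp [TwoStepRec]⟩
  add_mem' := by
    rintro a b ⟨ha, ha'⟩ ⟨hb, hb'⟩
    refine ⟨fun q hq => by simp [ha q hq, hb q hq], fun q h₁ h₂ => ?_⟩
    have hqa := ha' q h₁ h₂
    have hqb := hb' q h₁ h₂
    simp only [TwoStepRec, Pi.add_apply] at hqa hqb ⊢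
    linear_combination hqa + hqb
  smul_mem' := by
    rintro t c ⟨hc, hc'⟩
    refine ⟨fun q hq => by simp [hc q hq], fun q h₁ h₂ => ?_⟩
    have hqc := hc' q h₁ h₂
    simp only [TwoStepRec, Pi.smul_apply, smul_eq_mul] at hqc ⊢
    linear_combination t * hqc

theorem mem_twoStepRecSubmodule {lam : ℤ} {c : ℤ → ℂ} :
    c ∈ twoStepRecSubmodule lam ↔ (∀ q, lam < |q| → c q = 0) ∧
      ∀ q, -lam + 3 ≤ q → q ≤ lam - 1 → TwoStepRec lam c q :=
  Iff.rfl

theorem isSolS_iff_mem_twoStepRecSubmodule {lam : ℤ} {ν₁ ν₂ ν₃ : ℂ}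
    (h23 : (lam : ℂ) = ν₂ - ν₃ + 1) (h12 : (lam : ℂ) = ν₁ - ν₂ + 1) (c : ℤ → ℂ) :
    IsSolS lam ν₁ ν₂ ν₃ c ↔ c ∈ twoStepRecSubmodule lam := by
  obtain rfl : ν₁ = ν₂ + (lam - 1) := by linear_combination -h12
  obtain rfl : ν₃ = ν₂ - (lam - 1) := by linear_combination h23
  rw [IsSolS, mem_twoStepRecSubmodule, and_congr_right_iff]
  intro _
  constructor
  · rintro ⟨hE1, -⟩ q h₁ h₂
    have hne : (lam : ℂ) + q - 2 ≠ 0 := by exact_mod_cast (by omega : lam + q - 2 ≠ 0)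
    apply mul_left_cancel₀ hne
    linear_combination hE1 q (by omega) h₂
  · intro hrec
    refine ⟨fun q h₁ h₂ => ?_, fun q h₁ h₂ => ?_⟩
    · rcases eq_or_ne q (2 - lam) with rfl | hq
      · push_cast; ring
      · have h := hrec q (by omega) h₂
        unfold TwoStepRec at h
        linear_combination ((lam : ℂ) + q - 2) * h
    · rcases eq_or_ne q (lam - 2) with rfl | hq
      · push_cast; ring
      · have h := hrec (q + 2) (by omega) (by omega)
        unfold TwoStepRec at h
        rw [add_sub_cancel_right] at h
        push_cast at h
        linear_combination ((lam : ℂ) - q - 2) * h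

theorem twoStepRec_choose {lam q : ℤ} (hq : 2 - lam ≤ q) (hq' : q ≤ lam) :
    TwoStepRec lam (fun q => ((2 * lam).toNat.choose (lam - q).toNat : ℂ)) q := by
  obtain ⟨n, hn⟩ : ∃ n : ℕ, (n : ℤ) = 2 * lam := ⟨(2 * lam).toNat, by omega⟩
  obtain ⟨m, hm⟩ : ∃ m : ℕ, (m : ℤ) = lam - q := ⟨(lam - q).toNat, by omega⟩
  have hnat : n.choose (m + 2) * (m + 2) * (m + 1) = n.choose m * (n - m) * (n - (m + 1)) := by
    rw [n.choose_succ_right_eq (m + 1), mul_right_comm, n.choose_succ_right_eq m]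
  have hcast := congrArg (Nat.cast : ℕ → ℂ) hnat
  push_cast [Nat.cast_sub (by omega : m ≤ n), Nat.cast_sub (by omega : m + 1 ≤ n)] at hcast
  have hnC : (n : ℂ) = 2 * lam := by exact_mod_cast hn
  have hmC : (m : ℂ) = lam - q := by exact_mod_cast hm
  simp only [TwoStepRec, show (2 * lam).toNat = n by omega, show (lam - q).toNat = m by omega,
    show (lam - (q - 2)).toNat = m + 2 by omega]
  rw [hnC, hmC] at hcast
  linear_combination hcast

theorem solC0_eq_ite (lam q : ℤ) : solC0 lam q =
    if (lam - q) % 2 = 0 ∧ -lam ≤ q ∧ q ≤ lam then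
      ((2 * lam).toNat.choose (lam - q).toNat : ℂ) else 0 := by
  unfold solC0
  split_ifs with h
  swap; · rfl
  obtain ⟨N, hN⟩ : ∃ N : ℕ, (N : ℤ) = 2 * lam := ⟨(2 * lam).toNat, by omega⟩
  have hNC : 2 * (lam : ℂ) = N := by exact_mod_cast hN.symm
  rw [hNC, prod_range_cast_sub_eq_descFactorial (by omega),
    Nat.descFactorial_eq_factorial_mul_choose, show (2 * lam).toNat = N by omega, Nat.cast_mul,
    mul_div_cancel_left₀ _ (Nat.cast_ne_zero.2 (Nat.factorial_ne_zero _))]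

theorem solC1_eq_ite (lam q : ℤ) : solC1 lam q =
    if (lam - 1 - q) % 2 = 0 ∧ -lam + 1 ≤ q ∧ q ≤ lam - 1 then
      ((2 * lam).toNat.choose (lam - q).toNat : ℂ) / (2 * lam) else 0 := by
  unfold solC1
  split_ifs with h
  swap; · rfl
  obtain ⟨N, hN⟩ : ∃ N : ℕ, (N : ℤ) = 2 * lam - 1 := ⟨(2 * lam - 1).toNat, by omega⟩
  have hNC : 2 * (lam : ℂ) - 1 = N := by exact_mod_cast hN.symm
  have h2lam : 2 * (lam : ℂ) = (N + 1 : ℕ) := by push_cast; linear_combination hNC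
  set k := (lam - 1 - q).toNat
  have hchoose :
      ((N + 1).choose (k + 1) : ℂ) * (k + 1).factorial = (N + 1) * N.descFactorial k := by
    rw [← Nat.cast_mul, mul_comm, ← Nat.descFactorial_eq_factorial_mul_choose,
      Nat.succ_descFactorial_succ]
    push_cast; ring
  rw [hNC, prod_range_cast_sub_eq_descFactorial (by omega), h2lam,
    show (2 * lam).toNat = N + 1 by omega, show (lam - q).toNat = k + 1 by omega,
    div_eq_div_iff (Nat.cast_ne_zero.2 (Nat.factorial_ne_zero _))
      (Nat.cast_ne_zero.2 N.succ_ne_zero)]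
  push_cast
  linear_combination hchoose.symm

theorem indicatorFn_mem_twoStepRecSubmodule {lam a : ℤ} (hlam : 0 ≤ lam)
    (ha : a = lam ∨ a = -lam) :
    indicatorFn a ∈ twoStepRecSubmodule lam := by
  refine ⟨fun q hq => if_neg (by rw [lt_abs] at hq; omega), fun q h₁ h₂ => ?_⟩
  simp only [TwoStepRec, indicatorFn, if_neg (show q - 2 ≠ a by omega),
    if_neg (show q ≠ a by omega), mul_zero]

theorem solC0_mem_twoStepRecSubmodule (lam : ℤ) : solC0 lam ∈ twoStepRecSubmodule lam := by
  refine ⟨fun q hq => by rw [solC0_eq_ite, if_neg (by rw [lt_abs] at hq; omega)],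
    fun q h₁ h₂ => ?_⟩
  unfold TwoStepRec
  rw [solC0_eq_ite, solC0_eq_ite]
  by_cases hq : (lam - q) % 2 = 0
  · rw [if_pos (by omega), if_pos (by omega)]
    exact twoStepRec_choose (by omega) (by omega)
  · rw [if_neg (by omega), if_neg (by omega), mul_zero, mul_zero]

theorem solC1_mem_twoStepRecSubmodule (lam : ℤ) : solC1 lam ∈ twoStepRecSubmodule lam := by
  refine ⟨fun q hq => by rw [solC1_eq_ite, if_neg (by rw [lt_abs] at hq; omega)],
    fun q h₁ h₂ => ?_⟩
  unfold TwoStepRec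
  rw [solC1_eq_ite, solC1_eq_ite]
  by_cases hq : (lam - 1 - q) % 2 = 0
  · rw [if_pos (by omega), if_pos (by omega)]
    have h := twoStepRec_choose (lam := lam) (q := q) (by omega) (by omega)
    unfold TwoStepRec at h
    linear_combination h / (2 * (lam : ℂ))
  · rw [if_neg (by omega), if_neg (by omega), mul_zero, mul_zero]

theorem eq_zero_of_mem_twoStepRecSubmodule {lam : ℤ} {d : ℤ → ℂ}
    (hd : d ∈ twoStepRecSubmodule lam) (h₁ : d lam = 0) (h₂ : d (-lam) = 0)
    (h₃ : d (lam - 2) = 0) (h₄ : d (lam - 1) = 0) : d = 0 := by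
  obtain ⟨hsupp, hrec⟩ := hd
  have hrange : ∀ n : ℕ, ∀ q, lam - q = n → -lam ≤ q → d q = 0 := by
    intro n
    induction n using Nat.strong_induction_on with
    | _ n ih =>
      intro q hn hq
      obtain rfl | rfl | rfl | rfl | hq' :
          q = lam ∨ q = -lam ∨ q = lam - 2 ∨ q = lam - 1 ∨ (-lam + 1 ≤ q ∧ q ≤ lam - 3) := by
        omega
      · exact h₁
      · exact h₂
      · exact h₃
      · exact h₄
      have hr := hrec (q + 2) (by omega) (by omega)
      unfold TwoStepRec at hr
      rw [add_sub_cancel_right, ih (n - 2) (by omega) (q + 2) (by omega) (by omega),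
        mul_zero] at hr
      refine (mul_eq_zero.1 hr).resolve_left ?_
      exact_mod_cast (mul_ne_zero (by omega) (by omega) :
        (lam - (q + 2) + 2) * (lam - (q + 2) + 1) ≠ 0)
  funext q
  by_cases hq : lam < |q|
  · exact hsupp q hq
  · rw [not_lt, abs_le] at hq
    exact hrange (lam - q).toNat q (by omega) hq.1

section Values

variable {lam : ℤ}

theorem solC0_apply_self (hlam : 0 ≤ lam) : solC0 lam lam = 1 := by
  rw [solC0_eq_ite, if_pos (by omega), sub_self, Int.toNat_zero, Nat.choose_zero_right,
    Nat.cast_one]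

theorem solC0_apply_neg_self (hlam : 0 ≤ lam) : solC0 lam (-lam) = 1 := by
  rw [solC0_eq_ite, if_pos (by omega), sub_neg_eq_add, ← two_mul, Nat.choose_self, Nat.cast_one]

theorem solC0_apply_sub_one : solC0 lam (lam - 1) = 0 := by
  rw [solC0_eq_ite, if_neg (by omega)]

theorem solC0_apply_sub_two_ne_zero (hlam : 1 ≤ lam) : solC0 lam (lam - 2) ≠ 0 := by
  rw [solC0_eq_ite, if_pos (by omega), Nat.cast_ne_zero]
  exact (Nat.choose_pos (by omega)).ne'

theorem solC1_apply_self : solC1 lam lam = 0 := by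
  rw [solC1_eq_ite, if_neg (by omega)]

theorem solC1_apply_neg_self : solC1 lam (-lam) = 0 := by
  rw [solC1_eq_ite, if_neg (by omega)]

theorem solC1_apply_sub_two : solC1 lam (lam - 2) = 0 := by
  rw [solC1_eq_ite, if_neg (by omega)]

theorem solC1_apply_sub_one (hlam : 1 ≤ lam) : solC1 lam (lam - 1) = 1 := by
  rw [solC1_eq_ite, if_pos (by omega), sub_sub_cancel, Int.toNat_one, Nat.choose_one_right,
    div_eq_one_iff_eq (by exact_mod_cast (by omega : 2 * lam ≠ 0))]
  exact_mod_cast Int.toNat_of_nonneg (by omega : 0 ≤ 2 * lam)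

end Values

/-- `c₀` is the only generator not vanishing at `λ - 2`, and `c₀(±λ) = 1`. -/
noncomputable def solCoord (lam : ℤ) : Fin 4 → Module.Dual ℂ (ℤ → ℂ) :=
  let a := (solC0 lam (lam - 2))⁻¹
  ![LinearMap.proj lam - a • LinearMap.proj (lam - 2),
    LinearMap.proj (-lam) - a • LinearMap.proj (lam - 2),
    a • LinearMap.proj (lam - 2), LinearMap.proj (lam - 1)]

theorem solCoord_apply_generators {lam : ℤ} (hlam : 2 ≤ lam) (i j : Fin 4) :
    solCoord lam i (![indicatorFn lam, indicatorFn (-lam), solC0 lam, solC1 lam] j) =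
      if i = j then 1 else 0 := by
  have hA := solC0_apply_sub_two_ne_zero (lam := lam) (by omega)
  have h₁ : lam - 2 ≠ lam := by omega
  have h₂ : lam - 2 ≠ -lam := by omega
  have h₃ : lam - 1 ≠ lam := by omega
  have h₄ : lam - 1 ≠ -lam := by omega
  have h₅ : -lam ≠ lam := by omega
  fin_cases i <;> fin_cases j <;>
    simp [solCoord, indicatorFn, hA, h₁, h₂, h₃, h₄, h₅, h₅.symm, solC0_apply_self,
      solC0_apply_neg_self, solC0_apply_sub_one, solC1_apply_self, solC1_apply_neg_self,
      solC1_apply_sub_two, solC1_apply_sub_one, (by omega : 1 ≤ lam), (by omega : 0 ≤ lam)]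

theorem eq_zero_of_solCoord_eq_zero {lam : ℤ} (hlam : 1 ≤ lam) {d : ℤ → ℂ}
    (hd : d ∈ twoStepRecSubmodule lam) (h : ∀ i, solCoord lam i d = 0) : d = 0 := by
  have hA := solC0_apply_sub_two_ne_zero hlam
  have h₀ := h 0
  have h₁ := h 1
  have h₂ := h 2
  have h₃ := h 3
  simp only [solCoord, Fin.isValue, Matrix.cons_val, LinearMap.sub_apply, LinearMap.smul_apply,
    LinearMap.coe_proj, Function.eval, smul_eq_mul, mul_eq_zero, inv_eq_zero, hA, false_or]
    at h₀ h₁ h₂ h₃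
  rw [h₂, mul_zero, sub_zero] at h₀ h₁
  exact eq_zero_of_mem_twoStepRecSubmodule hd h₀ h₁ h₂ h₃

/-- If `λ ≥ 2`, `λ = ν₂ − ν₃ + 1` and `λ = ν₁ − ν₂ + 1`, then the solution space of
`S(λ,ν)` is four-dimensional, spanned by the indicator functions of `{λ}` and `{−λ}`
together with the functions `c₀` and `c₁`. -/
theorem solutions_of_S_when_lam_eq_both
    (lam : ℤ) (hlam : 2 ≤ lam) (ν₁ ν₂ ν₃ : ℂ)
    (h23 : (lam : ℂ) = ν₂ - ν₃ + 1) (h12 : (lam : ℂ) = ν₁ - ν₂ + 1) :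
    {c : ℤ → ℂ | IsSolS lam ν₁ ν₂ ν₃ c}
      = (Submodule.span ℂ
          {indicatorFn lam, indicatorFn (-lam), solC0 lam, solC1 lam} : Set (ℤ → ℂ)) ∧
    LinearIndependent ℂ ![indicatorFn lam, indicatorFn (-lam), solC0 lam, solC1 lam] := by
  have hmem : ∀ i, ![indicatorFn lam, indicatorFn (-lam), solC0 lam, solC1 lam] i ∈
      twoStepRecSubmodule lam := by
    intro i
    fin_cases i
    exacts [indicatorFn_mem_twoStepRecSubmodule (by omega) (Or.inl rfl),
      indicatorFn_mem_twoStepRecSubmodule (by omega) (Or.inr rfl),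
      solC0_mem_twoStepRecSubmodule lam, solC1_mem_twoStepRecSubmodule lam]
  obtain ⟨hspan, hli⟩ := Submodule.eq_span_and_linearIndependent_of_dual (solCoord lam) hmem
    (solCoord_apply_generators hlam) fun d hd => eq_zero_of_solCoord_eq_zero (by omega) hd
  have hrange : Set.range ![indicatorFn lam, indicatorFn (-lam), solC0 lam, solC1 lam] =
      {indicatorFn lam, indicatorFn (-lam), solC0 lam, solC1 lam} := by
    simp only [Matrix.range_cons, Matrix.range_empty, Set.union_empty, Set.singleton_union]
  refine ⟨Set.ext fun c => ?_, hli⟩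
  rw [Set.mem_ofPred_eq, isSolS_iff_mem_twoStepRecSubmodule h23 h12, ← hrange, ← hspan]
  rfl
end

section
/- Let ν₁, ν₂, ν₃ be integers with ν₁ > ν₂ > ν₃, and set λ = ν₁ − ν₃ + 1. Then the solution space of the system S(λ,ν) equals the span of the three functions v_o, v₊, v₋ : ℤ → ℂ defined as follows, where Γ denotes the complex Gamma function: v_o(q) = Γ((ν₁−ν₂+1+q)/2) / ( Γ((ν₂−ν₁+1+q)/2) · (λ+q)! · (λ−q)! ) if |q| ≤ λ and q ≡ ν₁−ν₂ (mod 2), and v_o(q) = 0 otherwise; v₊(q) = Γ((ν₁−ν₂+1+q)/2) / ( Γ((ν₂−ν₁+1+q)/2) · (λ+q)! · (λ−q)! ) if ν₁−ν₂+1 ≤ q ≤ λ and q ≡ ν₁−ν₂+1 (mod 2), and v₊(q) = 0 otherwise; v₋(q) = v₊(−q) for every integer q. (All Gamma arguments occurring in nonzero values of these functions are half-integers or positive integers, so no poles occur.) -/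
/-- The solution `v_o` (supported on `q ≡ ν₁−ν₂ (mod 2)`, `|q| ≤ λ`), where `λ = ν₁−ν₃+1`. -/
noncomputable def solVo (ν₁ ν₂ ν₃ : ℤ) : ℤ → ℂ := fun q =>
  if |q| ≤ ν₁ - ν₃ + 1 ∧ (q - (ν₁ - ν₂)) % 2 = 0 then
    Complex.Gamma (((ν₁ - ν₂ + 1 + q : ℤ) : ℂ) / 2)
      / (Complex.Gamma (((ν₂ - ν₁ + 1 + q : ℤ) : ℂ) / 2)
          * (Nat.factorial (ν₁ - ν₃ + 1 + q).toNat : ℂ)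
          * (Nat.factorial (ν₁ - ν₃ + 1 - q).toNat : ℂ))
  else 0

/-- The solution `v₊` (supported on `ν₁−ν₂+1 ≤ q ≤ λ`, `q ≡ ν₁−ν₂+1 (mod 2)`),
where `λ = ν₁−ν₃+1`. -/
noncomputable def solVplus (ν₁ ν₂ ν₃ : ℤ) : ℤ → ℂ := fun q =>
  if ν₁ - ν₂ + 1 ≤ q ∧ q ≤ ν₁ - ν₃ + 1 ∧ (q - (ν₁ - ν₂ + 1)) % 2 = 0 then
    Complex.Gamma (((ν₁ - ν₂ + 1 + q : ℤ) : ℂ) / 2)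
      / (Complex.Gamma (((ν₂ - ν₁ + 1 + q : ℤ) : ℂ) / 2)
          * (Nat.factorial (ν₁ - ν₃ + 1 + q).toNat : ℂ)
          * (Nat.factorial (ν₁ - ν₃ + 1 - q).toNat : ℂ))
  else 0

/-- The solution `v₋`, defined by `v₋(q) = v₊(−q)`. -/
noncomputable def solVminus (ν₁ ν₂ ν₃ : ℤ) : ℤ → ℂ := fun q => solVplus ν₁ ν₂ ν₃ (-q)


section SolAux

private lemma half_ne_neg_nat {k : ℤ} (hk : k % 2 = 1 ∨ 1 ≤ k) (m : ℕ) :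
    (k : ℂ) / 2 ≠ -(m : ℂ) := by
  intro h
  have h3 : k = -(2 * (m : ℤ)) := by
    have h2 : ((k : ℤ) : ℂ) = ((-(2 * (m : ℤ)) : ℤ) : ℂ) := by
      push_cast
      linear_combination 2 * h
    exact_mod_cast h2
  omega

private lemma gamma_half_ne_zero {k : ℤ} (hk : k % 2 = 1 ∨ 1 ≤ k) :
    Complex.Gamma ((k : ℂ) / 2) ≠ 0 :=
  Complex.Gamma_ne_zero fun m => half_ne_neg_nat hk m

private lemma int_half_ne_zero {k : ℤ} (hk : k ≠ 0) : (k : ℂ) / 2 ≠ 0 :=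
  div_ne_zero (Int.cast_ne_zero.mpr hk) two_ne_zero

private lemma gamma_step (k : ℤ) (hk : k ≠ 0) :
    Complex.Gamma (((k + 2 : ℤ) : ℂ) / 2) = ((k : ℂ) / 2) * Complex.Gamma ((k : ℂ) / 2) := by
  have h : ((k + 2 : ℤ) : ℂ) / 2 = (k : ℂ) / 2 + 1 := by push_cast; ring
  rw [h, Complex.Gamma_add_one _ (int_half_ne_zero hk)]

private lemma fact_step (m : ℤ) (hm : 0 ≤ m) :
    ((m + 2).toNat.factorial : ℂ) = ((m : ℂ) + 2) * ((m : ℂ) + 1) * (m.toNat.factorial : ℂ) := by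
  lift m to ℕ using hm
  have h : ((m : ℤ) + 2).toNat = m + 2 := by omega
  rw [h, show (m : ℤ).toNat = m from rfl, Nat.factorial_succ, Nat.factorial_succ]
  push_cast
  ring

private lemma cast_add_two_ne (m : ℤ) (h : 0 ≤ m) : (m : ℂ) + 2 ≠ 0 := by
  intro hh
  have h2 : ((m : ℤ) : ℂ) = ((-2 : ℤ) : ℂ) := by push_cast; linear_combination hh
  have := Int.cast_injective h2
  omega

private lemma cast_add_one_ne (m : ℤ) (h : 0 ≤ m) : (m : ℂ) + 1 ≠ 0 := by
  intro hh
  have h2 : ((m : ℤ) : ℂ) = ((-1 : ℤ) : ℂ) := by push_cast; linear_combination hh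
  have := Int.cast_injective h2
  omega

/-- The recursion relation satisfied by solutions. -/
def Rrel (a L : ℤ) (c : ℤ → ℂ) (q : ℤ) : Prop :=
  ((L : ℂ) - q) * ((L : ℂ) - q - 1) * ((q : ℂ) + a + 1) * c q
    = ((L : ℂ) + q + 2) * ((L : ℂ) + q + 1) * ((q : ℂ) + 1 - a) * c (q + 2)

/-- The common value function. -/
noncomputable def solW (ν₁ ν₂ ν₃ : ℤ) (q : ℤ) : ℂ :=
  Complex.Gamma (((ν₁ - ν₂ + 1 + q : ℤ) : ℂ) / 2)
    / (Complex.Gamma (((ν₂ - ν₁ + 1 + q : ℤ) : ℂ) / 2)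
        * (Nat.factorial (ν₁ - ν₃ + 1 + q).toNat : ℂ)
        * (Nat.factorial (ν₁ - ν₃ + 1 - q).toNat : ℂ))

set_option maxHeartbeats 1000000 in
private lemma solW_rec (ν₁ ν₂ ν₃ q : ℤ)
    (h1 : 0 ≤ ν₁ - ν₃ + 1 + q) (h2 : q + 2 ≤ ν₁ - ν₃ + 1)
    (hz1 : (ν₁ - ν₂ + 1 + q) % 2 = 1 ∨ 1 ≤ ν₁ - ν₂ + 1 + q)
    (hz2 : (ν₂ - ν₁ + 1 + q) % 2 = 1 ∨ 1 ≤ ν₂ - ν₁ + 1 + q) :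
    (((ν₁ - ν₃ + 1 : ℤ) : ℂ) - q) * (((ν₁ - ν₃ + 1 : ℤ) : ℂ) - q - 1)
        * ((q : ℂ) + ((ν₁ - ν₂ : ℤ) : ℂ) + 1) * solW ν₁ ν₂ ν₃ q
      = (((ν₁ - ν₃ + 1 : ℤ) : ℂ) + q + 2) * (((ν₁ - ν₃ + 1 : ℤ) : ℂ) + q + 1)
        * ((q : ℂ) + 1 - ((ν₁ - ν₂ : ℤ) : ℂ)) * solW ν₁ ν₂ ν₃ (q + 2) := by
  unfold solW
  have e1 : ν₁ - ν₂ + 1 + (q + 2) = (ν₁ - ν₂ + 1 + q) + 2 := by ring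
  have e2 : ν₂ - ν₁ + 1 + (q + 2) = (ν₂ - ν₁ + 1 + q) + 2 := by ring
  have e3 : ν₁ - ν₃ + 1 + (q + 2) = (ν₁ - ν₃ + 1 + q) + 2 := by ring
  have e4 : ν₁ - ν₃ + 1 - q = (ν₁ - ν₃ + 1 - (q + 2)) + 2 := by ring
  rw [e1, e2, e3, e4]
  rw [gamma_step _ (by omega), gamma_step _ (by omega),
    fact_step _ (by omega), fact_step _ (by omega)]
  have hB : Complex.Gamma (((ν₂ - ν₁ + 1 + q : ℤ) : ℂ) / 2) ≠ 0 := gamma_half_ne_zero hz2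
  have hzm : ((ν₂ - ν₁ + 1 + q : ℤ) : ℂ) / 2 ≠ 0 := int_half_ne_zero (by omega)
  have hF1 : ((ν₁ - ν₃ + 1 + q).toNat.factorial : ℂ) ≠ 0 :=
    Nat.cast_ne_zero.mpr (Nat.factorial_ne_zero _)
  have hF2 : ((ν₁ - ν₃ + 1 - (q + 2)).toNat.factorial : ℂ) ≠ 0 :=
    Nat.cast_ne_zero.mpr (Nat.factorial_ne_zero _)
  rw [← mul_div_assoc, ← mul_div_assoc,
    div_eq_div_iff
      (mul_ne_zero (mul_ne_zero hB hF1)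
        (mul_ne_zero (mul_ne_zero (cast_add_two_ne _ (by omega)) (cast_add_one_ne _ (by omega))) hF2))
      (mul_ne_zero
        (mul_ne_zero (mul_ne_zero hzm hB)
          (mul_ne_zero (mul_ne_zero (cast_add_two_ne _ (by omega)) (cast_add_one_ne _ (by omega))) hF1))
        hF2)]
  push_cast
  ring

end SolAux
section SolAux2

private lemma Rrel_outer (a L : ℤ) (c : ℤ → ℂ) (hs : ∀ q : ℤ, L < |q| → c q = 0)
    (hL : 1 ≤ L) (q : ℤ) (hq : q < -L ∨ L - 2 < q) : Rrel a L c q := by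
  unfold Rrel
  by_cases hcq : L < |q|
  · by_cases hcq2 : L < |q + 2|
    · rw [hs q hcq, hs _ hcq2]; ring
    · rw [hs q hcq]
      rw [lt_abs] at hcq; rw [not_lt, abs_le] at hcq2
      have e : L + q + 2 = 0 ∨ L + q + 1 = 0 := by omega
      rcases e with e | e
      · have h0 : (L : ℂ) + q + 2 = 0 := by
          have h' := congrArg (fun n : ℤ => (n : ℂ)) e
          push_cast at h'; linear_combination h'
        rw [h0]; ring
      · have h0 : (L : ℂ) + q + 1 = 0 := by
          have h' := congrArg (fun n : ℤ => (n : ℂ)) e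
          push_cast at h'; linear_combination h'
        rw [h0]; ring
  · by_cases hcq2 : L < |q + 2|
    · rw [hs _ hcq2]
      rw [not_lt, abs_le] at hcq; rw [lt_abs] at hcq2
      have e : L - q = 0 ∨ L - q - 1 = 0 := by omega
      rcases e with e | e
      · have h0 : (L : ℂ) - q = 0 := by
          have h' := congrArg (fun n : ℤ => (n : ℂ)) e
          push_cast at h'; linear_combination h'
        rw [h0]; ring
      · have h0 : (L : ℂ) - q - 1 = 0 := by
          have h' := congrArg (fun n : ℤ => (n : ℂ)) e
          push_cast at h'; linear_combination h'
        rw [h0]; ring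
    · exfalso; rw [not_lt, abs_le] at hcq hcq2; omega

private lemma Rrel.add {a L q : ℤ} {c₁ c₂ : ℤ → ℂ} (h1 : Rrel a L c₁ q)
    (h2 : Rrel a L c₂ q) : Rrel a L (c₁ + c₂) q := by
  unfold Rrel at *
  simp only [Pi.add_apply]
  linear_combination h1 + h2

private lemma Rrel.sub {a L q : ℤ} {c₁ c₂ : ℤ → ℂ} (h1 : Rrel a L c₁ q)
    (h2 : Rrel a L c₂ q) : Rrel a L (c₁ - c₂) q := by
  unfold Rrel at *
  simp only [Pi.sub_apply]
  linear_combination h1 - h2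

private lemma Rrel.smul {a L q : ℤ} (s : ℂ) {c : ℤ → ℂ} (h : Rrel a L c q) :
    Rrel a L (s • c) q := by
  unfold Rrel at *
  simp only [Pi.smul_apply, smul_eq_mul]
  linear_combination s * h

private lemma Rrel.zero {a L q : ℤ} : Rrel a L 0 q := by
  unfold Rrel; simp

private noncomputable def solSpace (a L : ℤ) : Submodule ℂ (ℤ → ℂ) where
  carrier := {c | (∀ q : ℤ, L < |q| → c q = 0) ∧ ∀ q : ℤ, Rrel a L c q}
  add_mem' := fun hx hy =>
    ⟨fun q hq => by simp only [Pi.add_apply, hx.1 q hq, hy.1 q hq, add_zero],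
     fun q => Rrel.add (hx.2 q) (hy.2 q)⟩
  zero_mem' := ⟨fun q _ => rfl, fun q => Rrel.zero⟩
  smul_mem' := fun s x hx =>
    ⟨fun q hq => by simp only [Pi.smul_apply, hx.1 q hq, smul_zero],
     fun q => Rrel.smul s (hx.2 q)⟩

private lemma ne_zero_cast3 {x : ℂ} (m : ℤ) (hm : m ≠ 0) (hx : (m : ℂ) = x) : x ≠ 0 := by
  rw [← hx]; exact Int.cast_ne_zero.mpr hm

private lemma sol_eq_zero (a L : ℤ) (ha : 1 ≤ a) (hL : a + 2 ≤ L) (d : ℤ → ℂ)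
    (hR : ∀ q : ℤ, Rrel a L d q) (h1 : d a = 0) (h2 : d (a + 1) = 0)
    (h3 : d (-a - 1) = 0) : d = 0 := by
  have step_up : ∀ q : ℤ, a ≤ q → d q = 0 → d (q + 2) = 0 := by
    intro q hq h0
    have hr := hR q
    unfold Rrel at hr
    rw [h0, mul_zero] at hr
    have hne : ((L : ℂ) + q + 2) * ((L : ℂ) + q + 1) * ((q : ℂ) + 1 - a) ≠ 0 :=
      mul_ne_zero (mul_ne_zero
        (ne_zero_cast3 (L + q + 2) (by omega) (by push_cast; ring))
        (ne_zero_cast3 (L + q + 1) (by omega) (by push_cast; ring)))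
        (ne_zero_cast3 (q + 1 - a) (by omega) (by push_cast; ring))
    rcases mul_eq_zero.mp hr.symm with h | h
    · exact absurd h hne
    · exact h
  have step_down : ∀ q : ℤ, q ≤ a - 1 → q ≠ -a - 1 → d (q + 2) = 0 → d q = 0 := by
    intro q hq hq' h0
    have hr := hR q
    unfold Rrel at hr
    rw [h0, mul_zero] at hr
    have hne : ((L : ℂ) - q) * ((L : ℂ) - q - 1) * ((q : ℂ) + a + 1) ≠ 0 :=
      mul_ne_zero (mul_ne_zero
        (ne_zero_cast3 (L - q) (by omega) (by push_cast; ring))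
        (ne_zero_cast3 (L - q - 1) (by omega) (by push_cast; ring)))
        (ne_zero_cast3 (q + a + 1) (by omega) (by push_cast; ring))
    rcases mul_eq_zero.mp hr with h | h
    · exact absurd h hne
    · exact h
  have up : ∀ k : ℕ, d (a + k) = 0 ∧ d (a + k + 1) = 0 := by
    intro k
    induction k with
    | zero => exact ⟨by simpa using h1, by simpa using h2⟩
    | succ k ih =>
      refine ⟨?_, ?_⟩
      · have h' := ih.2; convert h' using 2; push_cast; ring
      · have h' := step_up (a + k) (by omega) ih.1
        convert h' using 2; push_cast; ring
  have down : ∀ k : ℕ, d (a + 1 - k) = 0 ∧ d (a - k) = 0 := by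
    intro k
    induction k with
    | zero => exact ⟨by simpa using h2, by simpa using h1⟩
    | succ k ih =>
      refine ⟨?_, ?_⟩
      · have h' := ih.2; convert h' using 2; push_cast; ring
      · by_cases hk : (k : ℤ) = 2 * a
        · convert h3 using 2; push_cast; omega
        · apply step_down
          · push_cast; omega
          · push_cast; omega
          · have h' := ih.1; convert h' using 2; push_cast; ring
  funext q
  show d q = 0
  by_cases hq : a ≤ q
  · have h' := (up (q - a).toNat).1; convert h' using 2; omega
  · have h' := (down (a + 1 - q).toNat).1; convert h' using 2; omega

end SolAux2
section SolAux3

private lemma solVo_supp (ν₁ ν₂ ν₃ : ℤ) : ∀ q : ℤ, ν₁ - ν₃ + 1 < |q| → solVo ν₁ ν₂ ν₃ q = 0 := by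
  intro q h
  unfold solVo
  rw [if_neg]
  rintro ⟨h1, -⟩
  exact absurd h1 (not_le.mpr h)

private lemma solVplus_supp (ν₁ ν₂ ν₃ : ℤ) (h12 : ν₂ < ν₁) (h23 : ν₃ < ν₂) :
    ∀ q : ℤ, ν₁ - ν₃ + 1 < |q| → solVplus ν₁ ν₂ ν₃ q = 0 := by
  intro q h
  rw [lt_abs] at h
  unfold solVplus
  rw [if_neg]
  rintro ⟨h1, h2, -⟩
  omega

private lemma solVminus_supp (ν₁ ν₂ ν₃ : ℤ) (h12 : ν₂ < ν₁) (h23 : ν₃ < ν₂) :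
    ∀ q : ℤ, ν₁ - ν₃ + 1 < |q| → solVminus ν₁ ν₂ ν₃ q = 0 := by
  intro q h
  simp only [solVminus]
  exact solVplus_supp ν₁ ν₂ ν₃ h12 h23 (-q) (by rwa [abs_neg])

private lemma solVo_rrel (ν₁ ν₂ ν₃ : ℤ) (h12 : ν₂ < ν₁) (h23 : ν₃ < ν₂) (q : ℤ) :
    Rrel (ν₁ - ν₂) (ν₁ - ν₃ + 1) (solVo ν₁ ν₂ ν₃) q := by
  by_cases hin : -(ν₁ - ν₃ + 1) ≤ q ∧ q ≤ ν₁ - ν₃ + 1 - 2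
  · by_cases hpar : (q - (ν₁ - ν₂)) % 2 = 0
    · have hq1 : |q| ≤ ν₁ - ν₃ + 1 := by rw [abs_le]; omega
      have hq2 : |q + 2| ≤ ν₁ - ν₃ + 1 := by rw [abs_le]; omega
      unfold Rrel solVo
      rw [if_pos ⟨hq1, hpar⟩, if_pos ⟨hq2, by omega⟩]
      have h := solW_rec ν₁ ν₂ ν₃ q (by omega) (by omega) (Or.inl (by omega)) (Or.inl (by omega))
      unfold solW at h
      exact h
    · unfold Rrel solVo
      rw [if_neg fun hc => hpar hc.2,
        if_neg fun hc => hpar (by have := hc.2; omega)]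
      ring
  · exact Rrel_outer _ _ _ (solVo_supp ν₁ ν₂ ν₃) (by omega) q (by omega)

private lemma solVplus_rrel (ν₁ ν₂ ν₃ : ℤ) (h12 : ν₂ < ν₁) (h23 : ν₃ < ν₂) (q : ℤ) :
    Rrel (ν₁ - ν₂) (ν₁ - ν₃ + 1) (solVplus ν₁ ν₂ ν₃) q := by
  by_cases hin : -(ν₁ - ν₃ + 1) ≤ q ∧ q ≤ ν₁ - ν₃ + 1 - 2
  · by_cases hpar : (q - (ν₁ - ν₂ + 1)) % 2 = 0
    · by_cases hup : ν₁ - ν₂ + 1 ≤ q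
      · unfold Rrel solVplus
        rw [if_pos ⟨hup, by omega, hpar⟩, if_pos ⟨by omega, by omega, by omega⟩]
        have h := solW_rec ν₁ ν₂ ν₃ q (by omega) (by omega) (Or.inr (by omega)) (Or.inr (by omega))
        unfold solW at h
        exact h
      · unfold Rrel solVplus
        rw [if_neg fun hc => hup hc.1]
        by_cases he : q = ν₁ - ν₂ - 1
        · have h0 : (q : ℂ) + 1 - ((ν₁ - ν₂ : ℤ) : ℂ) = 0 := by
            have h' := congrArg (fun n : ℤ => (n : ℂ)) (show q + 1 - (ν₁ - ν₂) = 0 by omega)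
            push_cast at h' ⊢; linear_combination h'
          rw [h0]; ring
        · rw [if_neg fun hc => by have := hc.1; omega]
          ring
    · unfold Rrel solVplus
      rw [if_neg fun hc => hpar hc.2.2,
        if_neg fun hc => hpar (by have := hc.2.2; omega)]
      ring
  · exact Rrel_outer _ _ _ (solVplus_supp ν₁ ν₂ ν₃ h12 h23) (by omega) q (by omega)

private lemma solVminus_rrel (ν₁ ν₂ ν₃ : ℤ) (h12 : ν₂ < ν₁) (h23 : ν₃ < ν₂) (q : ℤ) :
    Rrel (ν₁ - ν₂) (ν₁ - ν₃ + 1) (solVminus ν₁ ν₂ ν₃) q := by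
  have h := solVplus_rrel ν₁ ν₂ ν₃ h12 h23 (-q - 2)
  unfold Rrel at h ⊢
  simp only [solVminus]
  rw [show -q - 2 + 2 = -q by ring] at h
  rw [show -(q + 2) = -q - 2 by ring]
  push_cast at h ⊢
  linear_combination h

private lemma isSolS_iff (ν₁ ν₂ ν₃ : ℤ) (h12 : ν₂ < ν₁) (h23 : ν₃ < ν₂) (c : ℤ → ℂ) :
    IsSolS (ν₁ - ν₃ + 1) (ν₁ : ℂ) (ν₂ : ℂ) (ν₃ : ℂ) c ↔
      ((∀ q : ℤ, ν₁ - ν₃ + 1 < |q| → c q = 0) ∧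
        ∀ q : ℤ, Rrel (ν₁ - ν₂) (ν₁ - ν₃ + 1) c q) := by
  constructor
  · rintro ⟨hs, hE1, hE2⟩
    refine ⟨hs, fun q => ?_⟩
    by_cases hin : -(ν₁ - ν₃ + 1) ≤ q ∧ q ≤ ν₁ - ν₃ + 1 - 2
    · by_cases hmid : q ≤ ν₁ - ν₃ + 1 - 3
      · have h := hE1 (q + 2) (by omega) (by omega)
        rw [show q + 2 - 2 = q by ring] at h
        unfold Rrel
        push_cast at h ⊢
        linear_combination h
      · have h := hE2 q (by omega) (by omega)
        unfold Rrel
        push_cast at h ⊢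
        linear_combination -h
    · exact Rrel_outer _ _ _ hs (by omega) q (by omega)
  · rintro ⟨hs, hR⟩
    refine ⟨hs, fun q hq1 hq2 => ?_, fun q hq1 hq2 => ?_⟩
    · have h := hR (q - 2)
      unfold Rrel at h
      rw [show q - 2 + 2 = q by ring] at h
      push_cast at h ⊢
      linear_combination h
    · have h := hR q
      unfold Rrel at h
      push_cast at h ⊢
      linear_combination -h

private lemma factC_ne (n : ℤ) : ((Nat.factorial n.toNat : ℕ) : ℂ) ≠ 0 :=
  Nat.cast_ne_zero.mpr (Nat.factorial_ne_zero _)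

private lemma solVo_ne (ν₁ ν₂ ν₃ : ℤ) (h12 : ν₂ < ν₁) (h23 : ν₃ < ν₂) :
    solVo ν₁ ν₂ ν₃ (ν₁ - ν₂) ≠ 0 := by
  unfold solVo
  rw [if_pos ⟨by rw [abs_le]; omega, by omega⟩]
  exact div_ne_zero (gamma_half_ne_zero (Or.inl (by omega)))
    (mul_ne_zero (mul_ne_zero (gamma_half_ne_zero (Or.inl (by omega))) (factC_ne _)) (factC_ne _))

private lemma solVplus_ne (ν₁ ν₂ ν₃ : ℤ) (h12 : ν₂ < ν₁) (h23 : ν₃ < ν₂) :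
    solVplus ν₁ ν₂ ν₃ (ν₁ - ν₂ + 1) ≠ 0 := by
  unfold solVplus
  rw [if_pos ⟨by omega, by omega, by omega⟩]
  exact div_ne_zero (gamma_half_ne_zero (Or.inr (by omega)))
    (mul_ne_zero (mul_ne_zero (gamma_half_ne_zero (Or.inr (by omega))) (factC_ne _)) (factC_ne _))

private lemma solVminus_eq3 (ν₁ ν₂ ν₃ : ℤ) :
    solVminus ν₁ ν₂ ν₃ (-(ν₁ - ν₂) - 1) = solVplus ν₁ ν₂ ν₃ (ν₁ - ν₂ + 1) := by
  simp only [solVminus]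
  congr 1
  ring

private lemma solVplus_zero₁ (ν₁ ν₂ ν₃ : ℤ) : solVplus ν₁ ν₂ ν₃ (ν₁ - ν₂) = 0 := by
  unfold solVplus; rw [if_neg]; rintro ⟨h, -, -⟩; omega

private lemma solVminus_zero₁ (ν₁ ν₂ ν₃ : ℤ) (h12 : ν₂ < ν₁) :
    solVminus ν₁ ν₂ ν₃ (ν₁ - ν₂) = 0 := by
  simp only [solVminus]; unfold solVplus; rw [if_neg]; rintro ⟨h, -, -⟩; omega

private lemma solVo_zero₂ (ν₁ ν₂ ν₃ : ℤ) : solVo ν₁ ν₂ ν₃ (ν₁ - ν₂ + 1) = 0 := by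
  unfold solVo; rw [if_neg]; rintro ⟨-, h⟩; omega

private lemma solVminus_zero₂ (ν₁ ν₂ ν₃ : ℤ) (h12 : ν₂ < ν₁) :
    solVminus ν₁ ν₂ ν₃ (ν₁ - ν₂ + 1) = 0 := by
  simp only [solVminus]; unfold solVplus; rw [if_neg]; rintro ⟨h, -, -⟩; omega

private lemma solVo_zero₃ (ν₁ ν₂ ν₃ : ℤ) : solVo ν₁ ν₂ ν₃ (-(ν₁ - ν₂) - 1) = 0 := by
  unfold solVo; rw [if_neg]; rintro ⟨-, h⟩; omega

private lemma solVplus_zero₃ (ν₁ ν₂ ν₃ : ℤ) (h12 : ν₂ < ν₁) :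
    solVplus ν₁ ν₂ ν₃ (-(ν₁ - ν₂) - 1) = 0 := by
  unfold solVplus; rw [if_neg]; rintro ⟨h, -, -⟩; omega

end SolAux3
/-- If `ν₁ > ν₂ > ν₃` are integers and `λ = ν₁ − ν₃ + 1`, then the solution space of
`S(λ,ν)` is the span of the three functions `v_o`, `v₊`, `v₋`. -/
theorem solutions_of_S_when_lam_eq_nu1_sub_nu3_add_one_dominant
    (ν₁ ν₂ ν₃ : ℤ) (h12 : ν₂ < ν₁) (h23 : ν₃ < ν₂) :
    {c : ℤ → ℂ | IsSolS (ν₁ - ν₃ + 1) (ν₁ : ℂ) (ν₂ : ℂ) (ν₃ : ℂ) c}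
      = (Submodule.span ℂ
          {solVo ν₁ ν₂ ν₃, solVplus ν₁ ν₂ ν₃, solVminus ν₁ ν₂ ν₃} : Set (ℤ → ℂ)) := by
  ext c
  simp only [Set.mem_setOf_eq, SetLike.mem_coe]
  rw [isSolS_iff ν₁ ν₂ ν₃ h12 h23 c]
  constructor
  · rintro ⟨hs, hR⟩
    have hvo := solVo_ne ν₁ ν₂ ν₃ h12 h23
    have hvp := solVplus_ne ν₁ ν₂ ν₃ h12 h23
    have hvm : solVminus ν₁ ν₂ ν₃ (-(ν₁ - ν₂) - 1) ≠ 0 := by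
      rw [solVminus_eq3]; exact hvp
    have hd : c - ((c (ν₁ - ν₂) / solVo ν₁ ν₂ ν₃ (ν₁ - ν₂)) • solVo ν₁ ν₂ ν₃
        + (c (ν₁ - ν₂ + 1) / solVplus ν₁ ν₂ ν₃ (ν₁ - ν₂ + 1)) • solVplus ν₁ ν₂ ν₃
        + (c (-(ν₁ - ν₂) - 1) / solVminus ν₁ ν₂ ν₃ (-(ν₁ - ν₂) - 1)) • solVminus ν₁ ν₂ ν₃) = 0 := by
      apply sol_eq_zero (ν₁ - ν₂) (ν₁ - ν₃ + 1) (by omega) (by omega)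
      · intro q
        exact Rrel.sub (hR q)
          (Rrel.add (Rrel.add (Rrel.smul _ (solVo_rrel ν₁ ν₂ ν₃ h12 h23 q))
            (Rrel.smul _ (solVplus_rrel ν₁ ν₂ ν₃ h12 h23 q)))
            (Rrel.smul _ (solVminus_rrel ν₁ ν₂ ν₃ h12 h23 q)))
      · simp only [Pi.sub_apply, Pi.add_apply, Pi.smul_apply, smul_eq_mul]
        rw [solVplus_zero₁ ν₁ ν₂ ν₃, solVminus_zero₁ ν₁ ν₂ ν₃ h12,
          div_mul_cancel₀ _ hvo]
        ring
      · simp only [Pi.sub_apply, Pi.add_apply, Pi.smul_apply, smul_eq_mul]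
        rw [solVo_zero₂ ν₁ ν₂ ν₃, solVminus_zero₂ ν₁ ν₂ ν₃ h12,
          div_mul_cancel₀ _ hvp]
        ring
      · simp only [Pi.sub_apply, Pi.add_apply, Pi.smul_apply, smul_eq_mul]
        rw [solVo_zero₃ ν₁ ν₂ ν₃, solVplus_zero₃ ν₁ ν₂ ν₃ h12,
          div_mul_cancel₀ _ hvm]
        ring
    rw [sub_eq_zero.mp hd]
    refine add_mem (add_mem (Submodule.smul_mem _ _ ?_) (Submodule.smul_mem _ _ ?_))
      (Submodule.smul_mem _ _ ?_)
    · exact Submodule.subset_span (Set.mem_insert _ _)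
    · exact Submodule.subset_span (Set.mem_insert_of_mem _ (Set.mem_insert _ _))
    · exact Submodule.subset_span (Set.mem_insert_of_mem _ (Set.mem_insert_of_mem _ rfl))
  · intro hc
    have hle : Submodule.span ℂ {solVo ν₁ ν₂ ν₃, solVplus ν₁ ν₂ ν₃, solVminus ν₁ ν₂ ν₃}
        ≤ solSpace (ν₁ - ν₂) (ν₁ - ν₃ + 1) := by
      rw [Submodule.span_le]
      rintro v hv
      simp only [Set.mem_insert_iff, Set.mem_singleton_iff] at hv
      rcases hv with rfl | rfl | rfl
      · exact ⟨solVo_supp ν₁ ν₂ ν₃, solVo_rrel ν₁ ν₂ ν₃ h12 h23⟩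
      · exact ⟨solVplus_supp ν₁ ν₂ ν₃ h12 h23, solVplus_rrel ν₁ ν₂ ν₃ h12 h23⟩
      · exact ⟨solVminus_supp ν₁ ν₂ ν₃ h12 h23, solVminus_rrel ν₁ ν₂ ν₃ h12 h23⟩
    exact hle hc
end

section
/- Let ν₁, ν₂, ν₃ be integers with ν₂ > ν₁ > ν₃, and set λ = ν₁ − ν₃ + 1. Then the solution space of the system S(λ,ν) equals the span of the two functions w₀, w₁ : ℤ → ℂ defined as follows, where Γ denotes the complex Gamma function and ε ∈ {0,1} is chosen with ε ≡ ν₁−ν₂+1 (mod 2): w₀(q) = Γ((ν₁−ν₂+1+q)/2) / ( Γ((ν₂−ν₁+1+q)/2) · (λ+q)! · (λ−q)! ) if |q| ≤ λ and q ≡ ν₁−ν₂ (mod 2), and w₀(q) = 0 otherwise; w₁(q) = (−1)^{(q−ε)/2} / ( Γ((ν₂−ν₁+1−q)/2) · Γ((ν₂−ν₁+1+q)/2) · (λ+q)! · (λ−q)! ) if |q| ≤ λ and q ≡ ν₁−ν₂+1 (mod 2), and w₁(q) = 0 otherwise. Here 1/Γ(z) is taken to be 0 when z is a nonpositive integer (this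 agrees with Mathlib's convention, since Mathlib's Gamma function vanishes at nonpositive integers); the Gamma arguments in w₀ are half-integers, so no poles occur there. -/
/-- The solution `w₀` (supported on `q ≡ ν₁−ν₂ (mod 2)`, `|q| ≤ λ`), where `λ = ν₁−ν₃+1`. -/
noncomputable def solW0 (ν₁ ν₂ ν₃ : ℤ) : ℤ → ℂ := fun q =>
  if |q| ≤ ν₁ - ν₃ + 1 ∧ (q - (ν₁ - ν₂)) % 2 = 0 then
    Complex.Gamma (((ν₁ - ν₂ + 1 + q : ℤ) : ℂ) / 2)
      / (Complex.Gamma (((ν₂ - ν₁ + 1 + q : ℤ) : ℂ) / 2)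
          * (Nat.factorial (ν₁ - ν₃ + 1 + q).toNat : ℂ)
          * (Nat.factorial (ν₁ - ν₃ + 1 - q).toNat : ℂ))
  else 0

/-- The solution `w₁` (supported on `q ≡ ν₁−ν₂+1 (mod 2)`, `|q| ≤ λ`), where
`λ = ν₁−ν₃+1` and `ε = (ν₁−ν₂+1) % 2 ∈ {0,1}`.  Division by a product containing a
vanishing value of `Complex.Gamma` (at a nonpositive integer) yields `0`. -/
noncomputable def solW1 (ν₁ ν₂ ν₃ : ℤ) : ℤ → ℂ := fun q =>
  if |q| ≤ ν₁ - ν₃ + 1 ∧ (q - (ν₁ - ν₂ + 1)) % 2 = 0 then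
    (-1 : ℂ) ^ ((q - (ν₁ - ν₂ + 1) % 2) / 2)
      / (Complex.Gamma (((ν₂ - ν₁ + 1 - q : ℤ) : ℂ) / 2)
          * Complex.Gamma (((ν₂ - ν₁ + 1 + q : ℤ) : ℂ) / 2)
          * (Nat.factorial (ν₁ - ν₃ + 1 + q).toNat : ℂ)
          * (Nat.factorial (ν₁ - ν₃ + 1 - q).toNat : ℂ))
  else 0

/-! For `λ = ν₁ - ν₃ + 1`, equation (E2) at `q - 2` is (E1) at `q` up to sign, so `S(λ,ν)` is the
single recurrence `(λ+q)(λ+q-1)(q+μ-1) c(q) = (λ-q+2)(λ-q+1)(q-μ-1) c(q-2)`, `μ = ν₂ - ν₁`, for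
functions supported in `[-λ, λ]`. It decouples along the parity of `q`. On `q ≡ μ (mod 2)` no
coefficient vanishes, so `c` is determined there by its value at the top of the class. On
`q ≡ μ + 1` the recurrence degenerates at `q = μ + 1` and `q = 1 - μ`, which forces `c = 0` for
`|q| > μ` and leaves one free value on `|q| < μ`. So the solutions form a space of dimension at
most two, and `w₀`, `w₁` lie in it by `Γ(s+1) = sΓ(s)` and `1/Γ(s) = s/Γ(s+1)`; they live on
different parity classes and do not vanish at the two anchor points. -/

open Complex

theorem Complex.Gamma_intCast_div_two_ne_zero {k : ℤ} (hk : 0 < k ∨ k % 2 = 1) :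
    Gamma ((k : ℂ) / 2) ≠ 0 := by
  refine Gamma_ne_zero fun n hn => ?_
  have : (k : ℂ) = ((-2 * n : ℤ) : ℂ) := by push_cast; linear_combination 2 * hn
  have := Int.cast_injective this
  omega

theorem Complex.Gamma_add_one_div_Gamma_add_one_mul {s : ℂ} (hs : s ≠ 0) (t : ℂ) :
    Gamma (s + 1) / Gamma (t + 1) * t = Gamma s / Gamma t * s := by
  rw [Gamma_add_one s hs, div_eq_mul_inv, div_eq_mul_inv,
    one_div_Gamma_eq_self_mul_one_div_Gamma_add_one t]
  ring

theorem Complex.inv_Gamma_mul_Gamma_add_one_mul (u v : ℂ) :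
    (Gamma u * Gamma (v + 1))⁻¹ * v = (Gamma (u + 1) * Gamma v)⁻¹ * u := by
  rw [mul_inv, mul_inv, one_div_Gamma_eq_self_mul_one_div_Gamma_add_one u,
    one_div_Gamma_eq_self_mul_one_div_Gamma_add_one v]
  ring

theorem eq_span_pair_of_eval_eq_zero {K ι : Type*} [Field K] {V : Submodule K (ι → K)}
    {w₀ w₁ : ι → K} {t₀ t₁ : ι} (hw₀ : w₀ ∈ V) (hw₁ : w₁ ∈ V)
    (h₀₀ : w₀ t₀ ≠ 0) (h₀₁ : w₀ t₁ = 0) (h₁₀ : w₁ t₀ = 0) (h₁₁ : w₁ t₁ ≠ 0)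
    (huniq : ∀ v ∈ V, v t₀ = 0 → v t₁ = 0 → v = 0) :
    V = Submodule.span K {w₀, w₁} := by
  refine le_antisymm (fun v hv => ?_)
    (Submodule.span_le.2 <| by simp [Set.insert_subset_iff, hw₀, hw₁])
  set a := v t₀ / w₀ t₀
  set b := v t₁ / w₁ t₁
  have hrest : v - a • w₀ - b • w₁ = 0 := by
    refine huniq _ (V.sub_mem (V.sub_mem hv (V.smul_mem a hw₀)) (V.smul_mem b hw₁)) ?_ ?_
    · simp [a, h₁₀, div_mul_cancel₀ _ h₀₀]
    · simp [b, h₀₁, div_mul_cancel₀ _ h₁₁]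
  rw [sub_sub, sub_eq_zero] at hrest
  exact Submodule.mem_span_pair.2 ⟨a, b, hrest.symm⟩

def recurrenceSpace (lam : ℤ) (μ : ℂ) : Submodule ℂ (ℤ → ℂ) where
  carrier := {c | (∀ q : ℤ, lam < |q| → c q = 0) ∧ ∀ q : ℤ, -lam + 2 ≤ q → q ≤ lam →
    ((lam : ℂ) + q) * (lam + q - 1) * (q + μ - 1) * c q
      = ((lam : ℂ) - q + 2) * (lam - q + 1) * (q - μ - 1) * c (q - 2)}
  add_mem' := by
    rintro c d ⟨hc, hc'⟩ ⟨hd, hd'⟩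
    refine ⟨fun q hq => by simp [hc q hq, hd q hq], fun q h₁ h₂ => ?_⟩
    simp only [Pi.add_apply]
    linear_combination hc' q h₁ h₂ + hd' q h₁ h₂
  zero_mem' := ⟨fun _ _ => rfl, fun _ _ _ => by simp⟩
  smul_mem' := by
    rintro a c ⟨hc, hc'⟩
    refine ⟨fun q hq => by simp [hc q hq], fun q h₁ h₂ => ?_⟩
    simp only [Pi.smul_apply, smul_eq_mul]
    linear_combination a * hc' q h₁ h₂

theorem isSolS_iff_mem_recurrenceSpace {lam : ℤ} {ν₁ ν₂ ν₃ : ℂ} (hlam : 2 ≤ lam)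
    (hν : (lam : ℂ) = ν₁ - ν₃ + 1) {c : ℤ → ℂ} :
    IsSolS lam ν₁ ν₂ ν₃ c ↔ c ∈ recurrenceSpace lam (ν₂ - ν₁) := by
  have hν₃ : ν₃ = ν₁ + 1 - lam := by linear_combination hν
  subst hν₃
  refine ⟨fun ⟨hvan, hE₁, hE₂⟩ => ⟨hvan, fun q h₁ h₂ => ?_⟩, fun ⟨hvan, hrec⟩ => ⟨hvan, ?_, ?_⟩⟩
  · rcases lt_or_eq_of_le h₂ with h₂ | rfl
    · linear_combination -hE₁ q h₁ (by omega)
    · have := hE₂ (q - 2) (by omega) (by omega)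
      simp only [sub_add_cancel] at this
      push_cast at this
      linear_combination this
  · intro q h₁ h₂
    linear_combination -hrec q h₁ (by omega)
  · intro q h₁ h₂
    have := hrec (q + 2) (by omega) (by omega)
    simp only [add_sub_cancel_right] at this
    push_cast at this
    linear_combination this

theorem apply_eq_zero_of_step_down {M : Type*} [Zero M] {c : ℤ → M} {t : ℤ} (ht : c t = 0)
    (step : ∀ q ≤ t, 2 ∣ t - q → c q = 0 → c (q - 2) = 0) {q : ℤ} (hq : q ≤ t)
    (hqt : 2 ∣ t - q) : c q = 0 := by
  obtain ⟨n, rfl⟩ : ∃ n : ℕ, q = t - 2 * n := ⟨((t - q) / 2).toNat, by omega⟩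
  induction n with
  | zero => simpa using ht
  | succ n ih =>
    have := step _ (by omega) (by omega) (ih (by omega) (by omega))
    rwa [show t - 2 * (n : ℤ) - 2 = t - 2 * (n + 1 : ℕ) by push_cast; ring] at this

theorem apply_eq_zero_of_step_up {M : Type*} [Zero M] {c : ℤ → M} {t : ℤ} (ht : c t = 0)
    (step : ∀ q, t < q → 2 ∣ q - t → c (q - 2) = 0 → c q = 0) {q : ℤ} (hq : t ≤ q)
    (hqt : 2 ∣ q - t) : c q = 0 := by
  obtain ⟨n, rfl⟩ : ∃ n : ℕ, q = t + 2 * n := ⟨((q - t) / 2).toNat, by omega⟩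
  induction n with
  | zero => simpa using ht
  | succ n ih =>
    refine step _ (by omega) (by omega) ?_
    rw [show t + 2 * ((n + 1 : ℕ) : ℤ) - 2 = t + 2 * n by push_cast; ring]
    exact ih (by omega) (by omega)

section recurrenceSpace

variable {lam : ℤ} {μ : ℂ} {c : ℤ → ℂ}

theorem apply_eq_zero_of_mem_recurrenceSpace (hc : c ∈ recurrenceSpace lam μ) {q : ℤ}
    (hq : -lam + 2 ≤ q) (ha : (q : ℂ) + μ - 1 ≠ 0) (h : ((q : ℂ) - μ - 1) * c (q - 2) = 0) :
    c q = 0 := by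
  rcases lt_or_ge lam q with hq' | hq'
  · exact hc.1 q (lt_abs.2 (Or.inl hq'))
  have hl₁ : (lam : ℂ) + q ≠ 0 := by norm_cast; omega
  have hl₂ : (lam : ℂ) + q - 1 ≠ 0 := by norm_cast; omega
  have : ((lam : ℂ) + q) * (lam + q - 1) * (q + μ - 1) * c q = 0 := by
    linear_combination hc.2 q hq hq' + ((lam : ℂ) - q + 2) * (lam - q + 1) * h
  simpa [hl₁, hl₂, ha] using this

theorem apply_sub_two_eq_zero_of_mem_recurrenceSpace (hc : c ∈ recurrenceSpace lam μ) {q : ℤ}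
    (hq : q ≤ lam) (hb : (q : ℂ) - μ - 1 ≠ 0) (h : ((q : ℂ) + μ - 1) * c q = 0) :
    c (q - 2) = 0 := by
  rcases lt_or_ge q (-lam + 2) with hq' | hq'
  · exact hc.1 _ (lt_abs.2 (Or.inr (by omega)))
  have hl₁ : (lam : ℂ) - q + 2 ≠ 0 := by norm_cast; omega
  have hl₂ : (lam : ℂ) - q + 1 ≠ 0 := by norm_cast; omega
  have : ((lam : ℂ) - q + 2) * (lam - q + 1) * (q - μ - 1) * c (q - 2) = 0 := by
    linear_combination -hc.2 q hq' hq + ((lam : ℂ) + q) * (lam + q - 1) * h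
  simpa [hl₁, hl₂, hb] using this

end recurrenceSpace

theorem eq_zero_of_mem_recurrenceSpace {lam m : ℤ} (hlam : 0 ≤ lam) (hm : 1 ≤ m) {c : ℤ → ℂ}
    (hc : c ∈ recurrenceSpace lam m) (h₀ : c (lam - (lam + m) % 2) = 0)
    (h₁ : c (min (lam - (lam + m + 1) % 2) (m - 1)) = 0) : c = 0 := by
  have ha : ∀ q : ℤ, q ≠ 1 - m → (q : ℂ) + m - 1 ≠ 0 := fun q hq => by norm_cast; omega
  have hb : ∀ q : ℤ, q ≠ m + 1 → (q : ℂ) - m - 1 ≠ 0 := fun q hq => by norm_cast; omega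
  have down : ∀ q ≤ lam, q ≠ m + 1 → c q = 0 → c (q - 2) = 0 := fun q hq hqm h =>
    apply_sub_two_eq_zero_of_mem_recurrenceSpace hc hq (hb q hqm) (by rw [h, mul_zero])
  have up : ∀ q, -lam + 2 ≤ q → q ≠ 1 - m → c (q - 2) = 0 → c q = 0 := fun q hq hqm h =>
    apply_eq_zero_of_mem_recurrenceSpace hc hq (ha q hqm) (by rw [h, mul_zero])
  -- on the class `q ≡ m + 1` the recurrence degenerates at `q = m + 1` and `q = 1 - m`
  have hupper : c (m + 1) = 0 :=
    apply_eq_zero_of_mem_recurrenceSpace hc (by omega) (ha _ (by omega)) (by push_cast; ring)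
  have hlower : c (-m - 1) = 0 := by
    have := apply_sub_two_eq_zero_of_mem_recurrenceSpace hc (q := 1 - m) (by omega)
      (hb _ (by omega)) (by push_cast; ring)
    rwa [show 1 - m - 2 = -m - 1 by ring] at this
  ext q
  rcases lt_or_ge lam |q| with hq | hq
  · exact hc.1 q hq
  rw [abs_le] at hq
  by_cases hpar : 2 ∣ q - m
  · exact apply_eq_zero_of_step_down h₀ (fun q' hq' hpar' => down q' (by omega) (by omega))
      (by omega) (by omega)
  by_cases hq_up : m + 1 ≤ q
  · exact apply_eq_zero_of_step_up hupper (fun q' hq' hpar' => up q' (by omega) (by omega))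
      hq_up (by omega)
  by_cases hq_low : q ≤ -m - 1
  · exact apply_eq_zero_of_step_down hlower (fun q' hq' hpar' => down q' (by omega) (by omega))
      hq_low (by omega)
  · exact apply_eq_zero_of_step_down h₁ (fun q' hq' hpar' => down q' (by omega) (by omega))
      (by omega) (by omega)

noncomputable def factorialWeighted (lam p : ℤ) (F : ℤ → ℂ) : ℤ → ℂ := fun q =>
  if |q| ≤ lam ∧ (q - p) % 2 = 0 then
    F q / (Nat.factorial (lam + q).toNat : ℂ) / (Nat.factorial (lam - q).toNat : ℂ)
  else 0

section factorialWeighted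

variable {lam p : ℤ} {F : ℤ → ℂ}

theorem factorialWeighted_apply_ne_zero {q : ℤ} (hq : |q| ≤ lam) (hpar : (q - p) % 2 = 0)
    (hF : F q ≠ 0) : factorialWeighted lam p F q ≠ 0 := by
  rw [factorialWeighted, if_pos ⟨hq, hpar⟩]
  exact div_ne_zero (div_ne_zero hF (Nat.cast_ne_zero.2 (Nat.factorial_ne_zero _)))
    (Nat.cast_ne_zero.2 (Nat.factorial_ne_zero _))

theorem factorialWeighted_apply_eq_zero {q : ℤ} (hpar : (q - p) % 2 ≠ 0) :
    factorialWeighted lam p F q = 0 :=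
  if_neg fun h => hpar h.2

theorem factorialWeighted_mem_recurrenceSpace {μ : ℂ}
    (hF : ∀ q, (q - p) % 2 = 0 → ((q : ℂ) + μ - 1) * F q = ((q : ℂ) - μ - 1) * F (q - 2)) :
    factorialWeighted lam p F ∈ recurrenceSpace lam μ := by
  refine ⟨fun q hq => if_neg fun h => not_le.2 hq h.1, fun q h₁ h₂ => ?_⟩
  by_cases hpar : (q - p) % 2 = 0
  swap
  · rw [factorialWeighted_apply_eq_zero hpar, factorialWeighted_apply_eq_zero (by omega)]
    ring
  rw [factorialWeighted, factorialWeighted, if_pos ⟨abs_le.2 ⟨by omega, h₂⟩, hpar⟩,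
    if_pos ⟨abs_le.2 ⟨by omega, by omega⟩, by omega⟩]
  obtain ⟨a, ha₁, ha₂, ha⟩ : ∃ a : ℕ, (lam + q).toNat = a + 2 ∧ (lam + (q - 2)).toNat = a ∧
      (a : ℂ) = lam + q - 2 :=
    ⟨(lam + q - 2).toNat, by omega, by omega, by norm_cast; omega⟩
  obtain ⟨b, hb₁, hb₂, hb⟩ : ∃ b : ℕ, (lam - (q - 2)).toNat = b + 2 ∧ (lam - q).toNat = b ∧
      (b : ℂ) = lam - q :=
    ⟨(lam - q).toNat, by omega, by omega, by norm_cast; omega⟩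
  rw [ha₁, ha₂, hb₁, hb₂, Nat.factorial_succ, Nat.factorial_succ, Nat.factorial_succ b.succ,
    Nat.factorial_succ b]
  have hfa : (a.factorial : ℂ) ≠ 0 := Nat.cast_ne_zero.2 (Nat.factorial_ne_zero _)
  have hfb : (b.factorial : ℂ) ≠ 0 := Nat.cast_ne_zero.2 (Nat.factorial_ne_zero _)
  have h₃ : (lam : ℂ) + q ≠ 0 := by norm_cast; omega
  have h₄ : (lam : ℂ) + q - 1 ≠ 0 := by norm_cast; omega
  have h₅ : (lam : ℂ) - q + 2 ≠ 0 := by norm_cast; omega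
  have h₆ : (lam : ℂ) - q + 1 ≠ 0 := by norm_cast; omega
  push_cast
  rw [ha, hb, show (lam : ℂ) + q - 2 + 1 + 1 = lam + q by ring,
    show (lam : ℂ) + q - 2 + 1 = lam + q - 1 by ring,
    show (lam : ℂ) - q + 1 + 1 = lam - q + 2 by ring]
  field_simp
  exact hF q hpar

end factorialWeighted

section solutions

variable (ν₁ ν₂ ν₃ : ℤ)

theorem solW0_eq_factorialWeighted :
    solW0 ν₁ ν₂ ν₃ = factorialWeighted (ν₁ - ν₃ + 1) (ν₁ - ν₂) fun q =>
      Gamma (((ν₁ - ν₂ + 1 + q : ℤ) : ℂ) / 2) / Gamma (((ν₂ - ν₁ + 1 + q : ℤ) : ℂ) / 2) := by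
  ext q
  simp only [solW0, factorialWeighted, div_mul_eq_div_div]

theorem solW1_eq_factorialWeighted :
    solW1 ν₁ ν₂ ν₃ = factorialWeighted (ν₁ - ν₃ + 1) (ν₁ - ν₂ + 1) fun q =>
      (-1 : ℂ) ^ ((q - (ν₁ - ν₂ + 1) % 2) / 2)
        / (Gamma (((ν₂ - ν₁ + 1 - q : ℤ) : ℂ) / 2) * Gamma (((ν₂ - ν₁ + 1 + q : ℤ) : ℂ) / 2)) := by
  ext q
  simp only [solW1, factorialWeighted, div_mul_eq_div_div]

theorem solW0_mem_recurrenceSpace :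
    solW0 ν₁ ν₂ ν₃ ∈ recurrenceSpace (ν₁ - ν₃ + 1) (ν₂ - ν₁ : ℤ) := by
  rw [solW0_eq_factorialWeighted]
  refine factorialWeighted_mem_recurrenceSpace fun q hq => ?_
  set s : ℂ := ((ν₁ - ν₂ - 1 + q : ℤ) : ℂ) / 2
  set t : ℂ := ((ν₂ - ν₁ - 1 + q : ℤ) : ℂ) / 2
  have hs : s ≠ 0 := div_ne_zero (by exact_mod_cast (by omega : ν₁ - ν₂ - 1 + q ≠ 0)) two_ne_zero
  rw [show ((ν₁ - ν₂ + 1 + q : ℤ) : ℂ) / 2 = s + 1 by simp only [s]; push_cast; ring,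
    show ((ν₂ - ν₁ + 1 + q : ℤ) : ℂ) / 2 = t + 1 by simp only [t]; push_cast; ring,
    show ((ν₁ - ν₂ + 1 + (q - 2) : ℤ) : ℂ) / 2 = s by simp only [s]; push_cast; ring,
    show ((ν₂ - ν₁ + 1 + (q - 2) : ℤ) : ℂ) / 2 = t by simp only [t]; push_cast; ring]
  rw [show (q : ℂ) + ((ν₂ - ν₁ : ℤ) : ℂ) - 1 = 2 * t by simp only [t]; push_cast; ring,
    show (q : ℂ) - ((ν₂ - ν₁ : ℤ) : ℂ) - 1 = 2 * s by simp only [s]; push_cast; ring]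
  linear_combination 2 * Gamma_add_one_div_Gamma_add_one_mul hs t

theorem solW1_mem_recurrenceSpace :
    solW1 ν₁ ν₂ ν₃ ∈ recurrenceSpace (ν₁ - ν₃ + 1) (ν₂ - ν₁ : ℤ) := by
  rw [solW1_eq_factorialWeighted]
  refine factorialWeighted_mem_recurrenceSpace fun q _ => ?_
  set u : ℂ := ((ν₂ - ν₁ + 1 - q : ℤ) : ℂ) / 2
  set v : ℂ := ((ν₂ - ν₁ - 1 + q : ℤ) : ℂ) / 2
  set σ : ℂ := (-1 : ℂ) ^ ((q - (ν₁ - ν₂ + 1) % 2) / 2)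
  have hσ : (-1 : ℂ) ^ ((q - 2 - (ν₁ - ν₂ + 1) % 2) / 2) = -σ := by
    rw [show (q - 2 - (ν₁ - ν₂ + 1) % 2) / 2 = (q - (ν₁ - ν₂ + 1) % 2) / 2 - 1 by omega,
      zpow_sub_one₀ (by norm_num)]
    simp [σ]
  rw [hσ, show ((ν₂ - ν₁ + 1 + q : ℤ) : ℂ) / 2 = v + 1 by simp only [v]; push_cast; ring,
    show ((ν₂ - ν₁ + 1 - (q - 2) : ℤ) : ℂ) / 2 = u + 1 by simp only [u]; push_cast; ring,
    show ((ν₂ - ν₁ + 1 + (q - 2) : ℤ) : ℂ) / 2 = v by simp only [v]; push_cast; ring]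
  rw [show (q : ℂ) + ((ν₂ - ν₁ : ℤ) : ℂ) - 1 = 2 * v by simp only [v]; push_cast; ring,
    show (q : ℂ) - ((ν₂ - ν₁ : ℤ) : ℂ) - 1 = -2 * u by simp only [u]; push_cast; ring]
  linear_combination 2 * σ * inv_Gamma_mul_Gamma_add_one_mul u v

theorem solW0_apply_ne_zero (h31 : ν₃ ≤ ν₁) :
    solW0 ν₁ ν₂ ν₃ (ν₁ - ν₃ + 1 - (ν₁ - ν₃ + 1 + (ν₂ - ν₁)) % 2) ≠ 0 := by
  rw [solW0_eq_factorialWeighted]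
  refine factorialWeighted_apply_ne_zero (abs_le.2 ⟨by omega, by omega⟩) (by omega) ?_
  exact div_ne_zero (Gamma_intCast_div_two_ne_zero (Or.inr (by omega)))
    (Gamma_intCast_div_two_ne_zero (Or.inr (by omega)))

theorem solW1_apply_ne_zero (h21 : ν₁ < ν₂) (h31 : ν₃ ≤ ν₁) :
    solW1 ν₁ ν₂ ν₃ (min (ν₁ - ν₃ + 1 - (ν₁ - ν₃ + 1 + (ν₂ - ν₁) + 1) % 2) (ν₂ - ν₁ - 1)) ≠ 0 := by
  rw [solW1_eq_factorialWeighted]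
  refine factorialWeighted_apply_ne_zero (abs_le.2 ⟨by omega, by omega⟩) (by omega) ?_
  exact div_ne_zero (zpow_ne_zero _ (by norm_num)) (mul_ne_zero
    (Gamma_intCast_div_two_ne_zero (Or.inl (by omega)))
    (Gamma_intCast_div_two_ne_zero (Or.inl (by omega))))

theorem solW0_apply_eq_zero :
    solW0 ν₁ ν₂ ν₃ (min (ν₁ - ν₃ + 1 - (ν₁ - ν₃ + 1 + (ν₂ - ν₁) + 1) % 2) (ν₂ - ν₁ - 1)) = 0 := by
  rw [solW0_eq_factorialWeighted]
  exact factorialWeighted_apply_eq_zero (by omega)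

theorem solW1_apply_eq_zero :
    solW1 ν₁ ν₂ ν₃ (ν₁ - ν₃ + 1 - (ν₁ - ν₃ + 1 + (ν₂ - ν₁)) % 2) = 0 := by
  rw [solW1_eq_factorialWeighted]
  exact factorialWeighted_apply_eq_zero (by omega)

end solutions

/-- If `ν₂ > ν₁ > ν₃` are integers and `λ = ν₁ − ν₃ + 1`, then the solution space of
`S(λ,ν)` is the span of the two functions `w₀` and `w₁`. -/
theorem solutions_of_S_when_lam_eq_nu1_sub_nu3_add_one_nondominant
    (ν₁ ν₂ ν₃ : ℤ) (h21 : ν₁ < ν₂) (h13 : ν₃ < ν₁) :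
    {c : ℤ → ℂ | IsSolS (ν₁ - ν₃ + 1) (ν₁ : ℂ) (ν₂ : ℂ) (ν₃ : ℂ) c}
      = (Submodule.span ℂ {solW0 ν₁ ν₂ ν₃, solW1 ν₁ ν₂ ν₃} : Set (ℤ → ℂ)) := by
  have hlam : 2 ≤ ν₁ - ν₃ + 1 := by omega
  have hsol : {c : ℤ → ℂ | IsSolS (ν₁ - ν₃ + 1) (ν₁ : ℂ) (ν₂ : ℂ) (ν₃ : ℂ) c}
      = recurrenceSpace (ν₁ - ν₃ + 1) (ν₂ - ν₁ : ℤ) := by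
    ext c
    rw [Set.mem_ofPred_eq, SetLike.mem_coe,
      isSolS_iff_mem_recurrenceSpace hlam (by push_cast; ring), Int.cast_sub]
  rw [hsol, eq_span_pair_of_eval_eq_zero (solW0_mem_recurrenceSpace ν₁ ν₂ ν₃)
    (solW1_mem_recurrenceSpace ν₁ ν₂ ν₃) (solW0_apply_ne_zero ν₁ ν₂ ν₃ h13.le)
    (solW0_apply_eq_zero ν₁ ν₂ ν₃) (solW1_apply_eq_zero ν₁ ν₂ ν₃)
    (solW1_apply_ne_zero ν₁ ν₂ ν₃ h21 h13.le)
    fun c hc => eq_zero_of_mem_recurrenceSpace (by omega) (by omega) hc]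
end
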